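/- arXiv:1502.06948 — 10 statements merged into one kernel-verified Lean document; each statement's English description precedes it below -/
import Mathlib

section
/- Every finite chordal graph on at least one vertex has a simplicial vertex, i.e., a vertex whose neighbourhood induces a complete graph. -/
open SimpleGraph

/-- `H` occurs as an induced subgraph of `G` iff there is a graph embedding `H ↪g G`.
`Free H G` means `G` has no induced subgraph isomorphic to `H`. -/
def Free {α β : Type*} (H : SimpleGraph α) (G : SimpleGraph β) : Prop :=
  IsEmpty (H ↪g G)

/-- A graph is chordal if it has no induced cycle of length at least `4`. -/
def Chordal {V : Type*} (G : SimpleGraph V) : Prop :=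
  ∀ n : ℕ, 4 ≤ n → _root_.Free (cycleGraph n) G

/-- A set is independent if no two of its vertices are adjacent. -/
def IsIndepSet {V : Type*} (G : SimpleGraph V) (s : Set V) : Prop :=
  s.Pairwise fun u v => ¬ G.Adj u v

/-- `2P2`: the disjoint union of two edges. -/
def twoP2 : SimpleGraph (Fin 4) :=
  SimpleGraph.fromRel fun a b => (a = 0 ∧ b = 1) ∨ (a = 2 ∧ b = 3)

/-- The paw: a triangle `0,1,2` with a pendant vertex `3` adjacent to `2`. -/
def paw : SimpleGraph (Fin 4) :=
  SimpleGraph.fromRel fun a b =>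
    (a = 0 ∧ b = 1) ∨ (a = 0 ∧ b = 2) ∨ (a = 1 ∧ b = 2) ∨ (a = 2 ∧ b = 3)

/-- `P1 + paw`: an isolated vertex `0` together with a paw on `1,2,3,4`. -/
def p1Paw : SimpleGraph (Fin 5) :=
  SimpleGraph.fromRel fun a b =>
    (a = 1 ∧ b = 2) ∨ (a = 1 ∧ b = 3) ∨ (a = 2 ∧ b = 3) ∨ (a = 3 ∧ b = 4)

/-- `2P1 + P3`: two isolated vertices `0,1` and a path `2-3-4`. -/
def twoP1P3 : SimpleGraph (Fin 5) :=
  SimpleGraph.fromRel fun a b => (a = 2 ∧ b = 3) ∨ (a = 3 ∧ b = 4)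

/-- The chair `S_{1,1,2}`: centre `0` with leaves `1,2` and pendant path `0-3-4`. -/
def chair : SimpleGraph (Fin 5) :=
  SimpleGraph.fromRel fun a b =>
    (a = 0 ∧ b = 1) ∨ (a = 0 ∧ b = 2) ∨ (a = 0 ∧ b = 3) ∨ (a = 3 ∧ b = 4)

/-- `P1 + diamond`: an isolated vertex `0` and a diamond (`K4` minus the edge `3-4`)
on `1,2,3,4`. -/
def p1Diamond : SimpleGraph (Fin 5) :=
  SimpleGraph.fromRel fun a b =>
    (a = 1 ∧ b = 2) ∨ (a = 1 ∧ b = 3) ∨ (a = 1 ∧ b = 4) ∨ (a = 2 ∧ b = 3) ∨ (a = 2 ∧ b = 4)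

/-- `P2 + P4`: an edge `0-1` and a path `2-3-4-5`. -/
def p2P4 : SimpleGraph (Fin 6) :=
  SimpleGraph.fromRel fun a b =>
    (a = 0 ∧ b = 1) ∨ (a = 2 ∧ b = 3) ∨ (a = 3 ∧ b = 4) ∨ (a = 4 ∧ b = 5)

/-- `S_{1,2,3}`: centre `0` with pendant paths `0-1`, `0-2-3` and `0-4-5-6`. -/
def s123 : SimpleGraph (Fin 7) :=
  SimpleGraph.fromRel fun a b =>
    (a = 0 ∧ b = 1) ∨ (a = 0 ∧ b = 2) ∨ (a = 2 ∧ b = 3) ∨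
    (a = 0 ∧ b = 4) ∨ (a = 4 ∧ b = 5) ∨ (a = 5 ∧ b = 6)

/-- A complete split graph: a clique `K` complete to an independent set `I`,
together covering all vertices. -/
def IsCompleteSplit {V : Type*} (G : SimpleGraph V) : Prop :=
  ∃ K I : Set V, (∀ v, v ∈ K ∨ v ∈ I) ∧ (∀ v, ¬ (v ∈ K ∧ v ∈ I)) ∧
    G.IsClique K ∧ _root_.IsIndepSet G I ∧ ∀ k ∈ K, ∀ i ∈ I, G.Adj k i

/-!
Dirac's argument, strengthened so that it inducts: inside a finite vertex set `s`, every vertex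
`v` that is not adjacent to all of `s` has a simplicial non-neighbour. Let `C` be a component of
`s` minus the closed neighbourhood of `v`, and `S` the neighbours of `v` that see `C`. Two
non-adjacent vertices of `S` would close, through `v` and a shortest path across `C`, an induced
cycle of length at least four, so `S` is a clique. Neighbourhoods of vertices of `C` stay inside
`C ∪ S`, which misses `v`; by induction `C ∪ S` is a clique or has two non-adjacent simplicial
vertices, and one of them lies in `C`, hence is simplicial in `s`.
-/

namespace SimpleGraph

variable {V : Type*} {G : SimpleGraph V}

theorem cycleGraph_adj_iff_val {n : ℕ} {i j : Fin (n + 2)} :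
    (cycleGraph (n + 2)).Adj i j ↔ i.val + 1 = j.val ∨ j.val + 1 = i.val ∨
      (i.val = 0 ∧ j.val = n + 1) ∨ (j.val = 0 ∧ i.val = n + 1) := by
  rw [cycleGraph_adj']
  rcases lt_trichotomy i j with h | rfl | h
  · rw [Fin.coe_sub_iff_lt.mpr h, Fin.coe_sub_iff_le.mpr h.le]
    omega
  · simp only [sub_self, Fin.val_zero]
    omega
  · rw [Fin.coe_sub_iff_le.mpr h.le, Fin.coe_sub_iff_lt.mpr h]
    omega

theorem cycleGraph_adj_castSucc {n : ℕ} {i j : Fin (n + 1)} :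
    (cycleGraph (n + 2)).Adj i.castSucc j.castSucc ↔ (pathGraph (n + 1)).Adj i j := by
  rw [cycleGraph_adj_iff_val, pathGraph_adj]
  simp only [Fin.val_castSucc]
  omega

theorem cycleGraph_adj_castSucc_last {n : ℕ} {i : Fin (n + 1)} :
    (cycleGraph (n + 2)).Adj i.castSucc (Fin.last (n + 1)) ↔ i = 0 ∨ i = Fin.last n := by
  rw [cycleGraph_adj_iff_val]
  simp only [Fin.val_castSucc, Fin.val_last, Fin.ext_iff, Fin.val_zero, and_true]
  omega

theorem Reachable.exists_pathGraph_embedding {x y : V} (h : G.Reachable x y) :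
    ∃ (n : ℕ) (e : pathGraph (n + 1) ↪g G), e 0 = x ∧ e (Fin.last n) = y := by
  obtain ⟨p, hp⟩ := h.exists_walk_length_eq_dist
  have hinj : ∀ i j, i ≤ p.length → j ≤ p.length → p.getVert i = p.getVert j → i = j :=
    fun i j hi hj h => (p.isPath_of_length_eq_dist hp).getVert_injOn hi hj h
  have hchord : ∀ i j, i < j → j ≤ p.length →
      G.Adj (p.getVert i) (p.getVert j) → j = i + 1 := by
    intro i j hij hj hadj
    have := G.dist_le (((p.take i).concat hadj).append (p.drop j))
    simp only [Walk.length_append, Walk.length_concat, Walk.take_length,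
      Walk.drop_length] at this
    omega
  have hadj : ∀ i j : Fin (p.length + 1),
      G.Adj (p.getVert i) (p.getVert j) ↔ (pathGraph (p.length + 1)).Adj i j := by
    intro i j
    rw [pathGraph_adj]
    constructor
    · intro hadj
      rcases lt_trichotomy i.val j.val with h | h | h
      · exact Or.inl (hchord _ _ h (by omega) hadj).symm
      · exact absurd hadj (by rw [h]; exact G.irrefl)
      · exact Or.inr (hchord _ _ h (by omega) hadj.symm).symm
    · rintro (h | h)
      · rw [← h]; exact p.adj_getVert_succ (by omega)
      · rw [← h]; exact (p.adj_getVert_succ (by omega)).symm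
  refine ⟨p.length, ⟨⟨fun i => p.getVert i, fun i j h => ?_⟩, hadj _ _⟩, p.getVert_zero,
    p.getVert_length⟩
  exact Fin.ext (hinj _ _ (by omega) (by omega) h)

theorem nonempty_cycleGraph_embedding_of_apex {n : ℕ} (e : pathGraph (n + 1) ↪g G) {v : V}
    (hv : ∀ i, e i ≠ v) (hadj : ∀ i, G.Adj (e i) v ↔ i = 0 ∨ i = Fin.last n) :
    Nonempty (cycleGraph (n + 2) ↪g G) := by
  let f : Fin (n + 2) → V := Fin.lastCases v e
  have hf : ∀ i j, G.Adj (f i) (f j) ↔ (cycleGraph (n + 2)).Adj i j := by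
    intro i j
    induction i using Fin.lastCases <;> induction j using Fin.lastCases <;>
      simp only [f, Fin.lastCases_last, Fin.lastCases_castSucc, G.irrefl, (cycleGraph _).irrefl,
        cycleGraph_adj_castSucc, cycleGraph_adj_castSucc_last, e.map_adj_iff, hadj,
        G.adj_comm v, (cycleGraph _).adj_comm (Fin.last _)]
  have hinj : Function.Injective f := by
    intro i j hij
    induction i using Fin.lastCases <;> induction j using Fin.lastCases <;>
      simp_all [f, (hv _).symm]
  exact ⟨⟨⟨f, hinj⟩, hf _ _⟩⟩

/-- Unlike `G.induce W`, this keeps the vertex type, so that reachability inside `W` is a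
relation on `V`. -/
def restrictTo (G : SimpleGraph V) (W : Set V) : SimpleGraph V where
  Adj a b := G.Adj a b ∧ a ∈ W ∧ b ∈ W
  symm := ⟨fun _ _ h => ⟨h.1.symm, h.2.2, h.2.1⟩⟩
  loopless := ⟨fun a h => G.loopless.irrefl a h.1⟩

@[simp]
theorem restrictTo_adj {W : Set V} {a b : V} :
    (G.restrictTo W).Adj a b ↔ G.Adj a b ∧ a ∈ W ∧ b ∈ W := Iff.rfl

theorem restrictTo_mono {W W' : Set V} (h : W ⊆ W') : G.restrictTo W ≤ G.restrictTo W' :=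
  fun _ _ hab => ⟨hab.1, h hab.2.1, h hab.2.2⟩

theorem Reachable.mem_of_restrictTo {W : Set V} {a b : V} (h : (G.restrictTo W).Reachable a b)
    (ha : a ∈ W) : b ∈ W := by
  obtain ⟨p⟩ := h
  cases p.reverse with
  | nil => exact ha
  | cons hadj _ => exact hadj.2.1

def IsSimplicialIn (G : SimpleGraph V) (s : Set V) (v : V) : Prop :=
  G.IsClique (G.neighborSet v ∩ s)

theorem IsClique.isSimplicialIn {s : Set V} (hs : G.IsClique s) (v : V) : G.IsSimplicialIn s v :=
  IsClique.subset Set.inter_subset_right hs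

theorem IsSimplicialIn.of_neighborSet_inter_subset {s t : Set V} {v : V}
    (hv : G.IsSimplicialIn t v) (hst : G.neighborSet v ∩ s ⊆ t) : G.IsSimplicialIn s v :=
  IsClique.subset (fun _ hz => ⟨hz.1, hst hz⟩ : _ ⊆ G.neighborSet v ∩ t) hv

theorem exists_isSimplicialIn_notMem_of_isClique {t K : Set V}
    (ht : ∀ v ∈ t, (t \ insert v (G.neighborSet v)).Nonempty →
      ∃ w ∈ t \ insert v (G.neighborSet v), G.IsSimplicialIn t w)
    (hK : G.IsClique K) (htK : ¬t ⊆ K) : ∃ w ∈ t, w ∉ K ∧ G.IsSimplicialIn t w := by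
  by_cases hclique : G.IsClique t
  · obtain ⟨w, hwt, hwK⟩ := Set.not_subset.mp htK
    exact ⟨w, hwt, hwK, hclique.isSimplicialIn w⟩
  obtain ⟨a, hat, b, hbt, hab, hnab⟩ : ∃ a ∈ t, ∃ b ∈ t, a ≠ b ∧ ¬G.Adj a b := by
    simpa [IsClique, Set.Pairwise] using hclique
  obtain ⟨w₁, ⟨hw₁t, hw₁a⟩, hw₁⟩ := ht a hat ⟨b, hbt, by simp [hab.symm, hnab]⟩
  obtain ⟨w₂, ⟨hw₂t, hw₂w₁⟩, hw₂⟩ :=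
    ht w₁ hw₁t ⟨a, hat, by simp_all [eq_comm, G.adj_comm]⟩
  by_cases hw₁K : w₁ ∈ K
  · refine ⟨w₂, hw₂t, fun hw₂K => ?_, hw₂⟩
    simp only [Set.mem_insert_iff, mem_neighborSet, not_or] at hw₂w₁
    exact hw₂w₁.2 (hK hw₁K hw₂K (Ne.symm hw₂w₁.1))
  · exact ⟨w₁, hw₁t, hw₁K, hw₁⟩

end SimpleGraph

section

variable {V : Type*} {G : SimpleGraph V}

theorem Chordal.adj_of_reachable_restrictTo (hG : Chordal G) {W : Set V} {v x y : V}
    (hvW : v ∉ W) (hxW : x ∈ W) (hxy : x ≠ y) (hvx : G.Adj v x) (hvy : G.Adj v y)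
    (hW : ∀ z ∈ W, G.Adj v z → z = x ∨ z = y) (hreach : (G.restrictTo W).Reachable x y) :
    G.Adj x y := by
  by_contra hnxy
  obtain ⟨n, e, he0, hen⟩ := hreach.exists_pathGraph_embedding
  have hmem (i) : e i ∈ W :=
    (((pathGraph_connected n).preconnected 0 i).map e.toHom).mem_of_restrictTo (he0 ▸ hxW)
  let e' : pathGraph (n + 1) ↪g G :=
    ⟨e.toEmbedding, fun {i j} => by simpa [hmem] using e.map_adj_iff (v := i) (w := j)⟩
  have hn : 2 ≤ n := by
    by_contra! hn
    interval_cases n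
    · exact hxy (he0.symm.trans hen)
    · exact hnxy (he0 ▸ hen ▸ (e.map_adj_iff.mpr (by simp [pathGraph_adj])).1)
  have hapex (i) : G.Adj (e i) v ↔ i = 0 ∨ i = Fin.last n := by
    refine ⟨fun h => ?_, ?_⟩
    · rcases hW _ (hmem i) h.symm with h | h
      · exact Or.inl (e.injective (h.trans he0.symm))
      · exact Or.inr (e.injective (h.trans hen.symm))
    · rintro (rfl | rfl)
      · exact he0 ▸ hvx.symm
      · exact hen ▸ hvy.symm
  obtain ⟨c⟩ :=
    nonempty_cycleGraph_embedding_of_apex e' (fun i h => hvW (by rw [← h]; exact hmem i)) hapex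
  exact (hG (n + 2) (by omega)).false c

theorem Chordal.isClique_adj_reachable (hG : Chordal G) {D : Set V} {u v : V}
    (hD : ∀ z ∈ D, z ≠ v ∧ ¬G.Adj v z) (hu : u ∈ D) :
    G.IsClique {x | G.Adj v x ∧ ∃ c, (G.restrictTo D).Reachable u c ∧ G.Adj x c} := by
  rintro x ⟨hvx, cx, hucx, hxcx⟩ y ⟨hvy, cy, hucy, hycy⟩ hxy
  have hcxD := hucx.mem_of_restrictTo hu
  have hcyD := hucy.mem_of_restrictTo hu
  refine hG.adj_of_reachable_restrictTo (W := insert x (insert y D)) (v := v) ?_ (by simp) hxy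
    hvx hvy ?_ ?_
  · rintro (rfl | rfl | hv)
    exacts [G.irrefl hvx, G.irrefl hvy, (hD v hv).1 rfl]
  · rintro z (rfl | rfl | hz) hvz
    exacts [Or.inl rfl, Or.inr rfl, absurd hvz (hD z hz).2]
  · have hcxcy : (G.restrictTo (insert x (insert y D))).Reachable cx cy :=
      (hucx.symm.trans hucy).mono (restrictTo_mono (by intro z; simp +contextual))
    refine Adj.reachable ?_ |>.trans hcxcy |>.trans (Adj.reachable ?_)
    · simp [hxcx, hcxD]
    · simp [hycy.symm, hcyD]

theorem Chordal.exists_isSimplicialIn_nonneighbor (hG : Chordal G) (s : Finset V) :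
    ∀ v ∈ s, ((s : Set V) \ insert v (G.neighborSet v)).Nonempty →
      ∃ w ∈ (s : Set V) \ insert v (G.neighborSet v), G.IsSimplicialIn s w := by
  classical
  induction s using Finset.strongInduction with
  | H s ih =>
    rintro v hvs ⟨u, huD⟩
    set D : Set V := (s : Set V) \ insert v (G.neighborSet v)
    have hD : ∀ z ∈ D, z ≠ v ∧ ¬G.Adj v z := fun z hz => by simpa [D, not_or] using hz.2
    set C : Set V := {c | (G.restrictTo D).Reachable u c}
    set S : Set V := {x | G.Adj v x ∧ ∃ c, (G.restrictTo D).Reachable u c ∧ G.Adj x c}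
    have hCD : C ⊆ D := fun c hc => hc.mem_of_restrictTo huD
    let t : Finset V := s.filter (· ∈ C ∪ S)
    have hts : t ⊂ s := Finset.filter_ssubset.mpr
      ⟨v, hvs, by rintro (hvC | ⟨hvv, -⟩); exacts [(hD v (hCD hvC)).1 rfl, G.irrefl hvv]⟩
    have hnbr : ∀ c ∈ C, G.neighborSet c ∩ s ⊆ t := by
      rintro c hc z ⟨hcz, hzs⟩
      refine Finset.mem_filter.mpr ⟨hzs, ?_⟩
      by_cases hvz : G.Adj v z
      · exact Or.inr ⟨hvz, c, hc, hcz.symm⟩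
      · have hzD : z ∈ D := by
          refine ⟨hzs, ?_⟩
          rintro (rfl | hvz')
          exacts [(hD c (hCD hc)).2 hcz.symm, hvz hvz']
        exact Or.inl (hc.trans (Adj.reachable ⟨hcz, hCD hc, hzD⟩))
    obtain ⟨w, hwt, hwS, hw⟩ := exists_isSimplicialIn_notMem_of_isClique (K := S)
      (fun v' hv' hD' => ih t hts v' hv' hD') (hG.isClique_adj_reachable hD huD)
      (fun h => (hD u huD).2 (h (Finset.mem_filter.mpr ⟨huD.1, Or.inl Reachable.rfl⟩)).1)
    have hwC : w ∈ C := ((Finset.mem_filter.mp hwt).2).resolve_right hwS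
    exact ⟨w, hCD hwC, hw.of_neighborSet_inter_subset (hnbr w hwC)⟩

end

/-- Every finite chordal graph on at least one vertex has a simplicial vertex. -/
theorem chordal_exists_simplicial {V : Type*} [Fintype V] [Nonempty V]
    (G : SimpleGraph V) (hG : Chordal G) :
    ∃ v : V, ∀ a ∈ G.neighborSet v, ∀ b ∈ G.neighborSet v, a ≠ b → G.Adj a b := by
  classical
  obtain ⟨v, -, -, hv⟩ := exists_isSimplicialIn_notMem_of_isClique (t := Set.univ)
    (by simpa using hG.exists_isSimplicialIn_nonneighbor Finset.univ)
    (isClique_empty (G := G)) (by simp)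
  exact ⟨v, fun a ha b hb hab => hv ⟨ha, trivial⟩ ⟨hb, trivial⟩ hab⟩
end

section
/- A finite graph is a split graph (its vertex set can be partitioned into a clique and an independent set) if and only if it has no induced subgraph isomorphic to C4, C5, or 2P2. -/
open SimpleGraph

/-! A split partition `(K, Kᶜ)` restricts to induced subgraphs, while `C4`, `C5` and `2P2` have
none. Conversely, take a maximum clique `K` whose complement spans as few edges as possible and
suppose some edge `xy` avoids `K`. Excluding `C4` and `2P2` leaves a single vertex `v ∈ K` missing
both `x` and `y`, with (up to swapping `x` and `y`) every other vertex of `K` adjacent to `y`. Then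
`K - v + y` is again a maximum clique, so by the choice of `K`, `v` has at least as many neighbours
outside it as `y` does; as `x` is a neighbour of `y` but not of `v`, some `z` is a neighbour of `v`
but not of `y`. Together with a vertex `w ∈ K - v` missing `x`, the vertices `x, y, w, v, z`
contain an induced `C4`, `C5` or `2P2`. -/

open Finset

instance : DecidableRel twoP2.Adj := fun a b =>
  decidable_of_iff _ (SimpleGraph.fromRel_adj _ a b).symm

namespace SimpleGraph

variable {α V : Type*} {H : SimpleGraph α} {G : SimpleGraph V}

def IsSplit (G : SimpleGraph V) : Prop :=
  ∃ K : Set V, G.IsClique K ∧ _root_.IsIndepSet G Kᶜ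

lemma isSplit_iff_exists_partition :
    G.IsSplit ↔ ∃ K I : Set V, (∀ v, v ∈ K ∨ v ∈ I) ∧ (∀ v, ¬ (v ∈ K ∧ v ∈ I)) ∧
      G.IsClique K ∧ _root_.IsIndepSet G I := by
  constructor
  · rintro ⟨K, hK, hI⟩
    exact ⟨K, Kᶜ, fun v => em _, fun v h => h.2 h.1, hK, hI⟩
  · rintro ⟨K, I, hcov, -, hK, hI⟩
    exact ⟨K, hK, hI.mono fun v hv => (hcov v).resolve_left hv⟩

lemma IsSplit.comap (f : H ↪g G) (hG : G.IsSplit) : H.IsSplit := by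
  obtain ⟨K, hK, hI⟩ := hG
  exact ⟨f ⁻¹' K, fun i hi j hj hij => f.map_adj_iff.1 (hK hi hj (f.injective.ne hij)),
    fun i hi j hj hij h => hI hi hj (f.injective.ne hij) (f.map_adj_iff.2 h)⟩

lemma IsSplit.free (hG : G.IsSplit) (hH : ¬ H.IsSplit) : _root_.Free H G :=
  ⟨fun f => hH (hG.comap f)⟩

lemma isSplit_iff_exists_finset [Fintype α] :
    H.IsSplit ↔ ∃ s : Finset α, (∀ i ∈ s, ∀ j ∈ s, i ≠ j → H.Adj i j) ∧
      ∀ i ∉ s, ∀ j ∉ s, i ≠ j → ¬ H.Adj i j := by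
  classical
  constructor
  · rintro ⟨K, hK, hI⟩
    exact ⟨K.toFinset, fun i hi j hj => hK (by simpa using hi) (by simpa using hj),
      fun i hi j hj => hI (by simpa using hi) (by simpa using hj)⟩
  · rintro ⟨s, hK, hI⟩
    exact ⟨s, fun i hi j hj => hK i hi j hj, fun i hi j hj => hI i hi j hj⟩

lemma not_isSplit_cycleGraph_four : ¬ (cycleGraph 4).IsSplit := by
  rw [isSplit_iff_exists_finset]; decide

lemma not_isSplit_cycleGraph_five : ¬ (cycleGraph 5).IsSplit := by
  rw [isSplit_iff_exists_finset]; decide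

lemma not_isSplit_twoP2 : ¬ twoP2.IsSplit := by
  rw [isSplit_iff_exists_finset]; decide

lemma injective_of_adj_iff (hH : ∀ i j, (∀ k, H.Adj i k ↔ H.Adj j k) → i = j) {f : α → V}
    (hf : ∀ i j, G.Adj (f i) (f j) ↔ H.Adj i j) : Function.Injective f :=
  fun i j hij => hH i j fun k => by rw [← hf, ← hf, hij]

section InducedCopies

variable {a b c d e : V}

lemma not_free_cycleGraph_four (hab : G.Adj a b) (hbc : G.Adj b c) (hcd : G.Adj c d)
    (hda : G.Adj d a) (hac : ¬ G.Adj a c) (hbd : ¬ G.Adj b d) (hac_ne : a ≠ c) (hbd_ne : b ≠ d) :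
    ¬ _root_.Free (cycleGraph 4) G := by
  have hinj : Function.Injective ![a, b, c, d] := by
    rw [← List.nodup_ofFn]
    simpa using ⟨⟨hab.ne, hac_ne, hda.ne'⟩, ⟨hbc.ne, hbd_ne⟩, hcd.ne⟩
  refine fun h => h.false ⟨⟨_, hinj⟩, fun {i j} => ?_⟩
  fin_cases i <;> fin_cases j <;>
    simp +decide [hab, hbc, hcd, hda, hac, hbd, hab.symm, hbc.symm, hcd.symm, hda.symm,
      G.adj_comm c a, G.adj_comm d b]

lemma not_free_cycleGraph_five (hab : G.Adj a b) (hbc : G.Adj b c) (hcd : G.Adj c d)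
    (hde : G.Adj d e) (hea : G.Adj e a) (hac : ¬ G.Adj a c) (had : ¬ G.Adj a d)
    (hbd : ¬ G.Adj b d) (hbe : ¬ G.Adj b e) (hce : ¬ G.Adj c e) :
    ¬ _root_.Free (cycleGraph 5) G := by
  have hf : ∀ i j, G.Adj (![a, b, c, d, e] i) (![a, b, c, d, e] j) ↔ (cycleGraph 5).Adj i j := by
    intro i j
    fin_cases i <;> fin_cases j <;>
      simp +decide [hab, hbc, hcd, hde, hea, hac, had, hbd, hbe, hce, hab.symm, hbc.symm,
        hcd.symm, hde.symm, hea.symm, G.adj_comm c a, G.adj_comm d a, G.adj_comm d b,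
        G.adj_comm e b, G.adj_comm e c]
  exact fun h => h.false ⟨⟨_, injective_of_adj_iff (by decide) hf⟩, hf _ _⟩

lemma not_free_twoP2 (hab : G.Adj a b) (hcd : G.Adj c d) (hac : ¬ G.Adj a c)
    (had : ¬ G.Adj a d) (hbc : ¬ G.Adj b c) (hbd : ¬ G.Adj b d) : ¬ _root_.Free twoP2 G := by
  have hf : ∀ i j, G.Adj (![a, b, c, d] i) (![a, b, c, d] j) ↔ twoP2.Adj i j := by
    intro i j
    fin_cases i <;> fin_cases j <;>
      simp +decide [hab, hcd, hac, had, hbc, hbd, hab.symm, hcd.symm, G.adj_comm c a,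
        G.adj_comm d a, G.adj_comm c b, G.adj_comm d b]
  exact fun h => h.false ⟨⟨_, injective_of_adj_iff (by decide) hf⟩, hf _ _⟩

end InducedCopies

variable {K T : Finset V} {v x y : V}

section DegreeSum

variable [DecidableEq V] [DecidableRel G.Adj]

variable (G) in
def degreeSumOn (T : Finset V) : ℕ := ∑ a ∈ T, #{b ∈ T | G.Adj a b}

lemma degreeSumOn_insert (hy : y ∉ T) :
    G.degreeSumOn (insert y T) = G.degreeSumOn T + 2 * #{b ∈ T | G.Adj y b} := by
  simp only [degreeSumOn, card_filter, sum_insert hy, G.irrefl, if_false, sum_add_distrib,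
    G.adj_comm _ y]
  ring

end DegreeSum

section MaximumClique

variable [Fintype V] [DecidableEq V]

lemma IsMaximumClique.exists_not_adj (hK : G.IsMaximumClique K) (hx : x ∉ K) :
    ∃ u ∈ K, ¬ G.Adj u x := by
  by_contra! h
  have hcl : G.IsClique (insert x K : Finset V) := by
    rw [coe_insert]
    exact hK.isClique.insert fun u hu _ => (h u hu).symm
  have := hK.maximum _ hcl
  rw [card_insert_of_notMem hx] at this
  omega

lemma IsMaximumClique.insert_erase (hK : G.IsMaximumClique K) (hv : v ∈ K) (hy : y ∉ K)
    (hKy : ∀ w ∈ K, w ≠ v → G.Adj w y) : G.IsMaximumClique (insert y (K.erase v)) := by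
  have hcard : #(insert y (K.erase v)) = #K := by
    rw [card_insert_of_notMem (fun h => hy (mem_of_mem_erase h)), card_erase_add_one hv]
  refine ⟨?_, fun t ht => hcard ▸ hK.maximum t ht⟩
  rw [coe_insert, coe_erase]
  exact (hK.isClique.subset Set.sdiff_subset).insert fun w hw _ => (hKy w hw.1 hw.2).symm

lemma compl_insert_erase (hv : v ∈ K) (hy : y ∉ K) :
    (insert y (K.erase v))ᶜ = insert v (Kᶜ.erase y) := by
  ext a
  by_cases hav : a = v <;> by_cases hay : a = y <;> simp_all

end MaximumClique

section OptimalClique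

variable [Fintype V] [DecidableEq V] [DecidableRel G.Adj]

variable (G) in
def IsOptimalClique (K : Finset V) : Prop :=
  G.IsMaximumClique K ∧ ∀ K', G.IsMaximumClique K' → G.degreeSumOn Kᶜ ≤ G.degreeSumOn K'ᶜ

variable (G) in
lemma exists_isOptimalClique : ∃ K, G.IsOptimalClique K := by
  classical
  obtain ⟨K₀, hK₀⟩ := G.maximumClique_exists
  obtain ⟨K, hK, hmin⟩ := exists_min_image {K | G.IsMaximumClique K}
    (fun K => G.degreeSumOn Kᶜ) ⟨K₀, by simpa using hK₀⟩
  exact ⟨K, by simpa using hK, fun K' hK' => hmin K' (by simpa using hK')⟩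

lemma IsOptimalClique.card_adj_le (hK : G.IsOptimalClique K) (hv : v ∈ K) (hy : y ∉ K)
    (hKy : ∀ w ∈ K, w ≠ v → G.Adj w y) :
    #{b ∈ Kᶜ.erase y | G.Adj y b} ≤ #{b ∈ Kᶜ.erase y | G.Adj v b} := by
  have hle := hK.2 _ (hK.1.insert_erase hv hy hKy)
  rw [compl_insert_erase hv hy, ← insert_erase (mem_compl.2 hy),
    degreeSumOn_insert (notMem_erase y _), erase_insert (notMem_erase y _),
    degreeSumOn_insert (fun h => mem_compl.1 (mem_of_mem_erase h) hv)] at hle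
  omega

lemma IsOptimalClique.exists_adj_not_adj (hK : G.IsOptimalClique K) (hv : v ∈ K) (hx : x ∉ K)
    (hy : y ∉ K) (hxy : G.Adj x y) (hvx : ¬ G.Adj v x) (hKy : ∀ w ∈ K, w ≠ v → G.Adj w y) :
    ∃ z, G.Adj v z ∧ ¬ G.Adj y z := by
  have hxT : x ∈ {b ∈ Kᶜ.erase y | G.Adj y b} := by simp [hx, hxy.ne, hxy.symm]
  obtain ⟨z, hz, hzy⟩ := exists_mem_notMem_of_card_lt_card <|
    (card_erase_lt_of_mem hxT).trans_le (hK.card_adj_le hv hy hKy)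
  have hvz : G.Adj v z := (mem_filter.1 hz).2
  refine ⟨z, hvz, fun hyz => hzy ?_⟩
  exact mem_erase.2 ⟨fun h => hvx (h ▸ hvz), mem_filter.2 ⟨(mem_filter.1 hz).1, hyz⟩⟩

lemma IsOptimalClique.not_adj (h4 : _root_.Free (cycleGraph 4) G)
    (h5 : _root_.Free (cycleGraph 5) G) (h2 : _root_.Free twoP2 G) (hK : G.IsOptimalClique K)
    (hx : x ∉ K) (hy : y ∉ K) (hyx : ∀ u ∈ K, ¬ G.Adj u y → ¬ G.Adj u x) : ¬ G.Adj x y := by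
  intro hxy
  obtain ⟨v, hv, hvy⟩ := hK.1.exists_not_adj hy
  have hvx := hyx v hv hvy
  have hKy : ∀ w ∈ K, w ≠ v → G.Adj w y := fun w hw hwv => by
    by_contra hwy
    exact not_free_twoP2 hxy (hK.1.isClique hv hw hwv.symm) (mt Adj.symm hvx)
      (mt Adj.symm (hyx w hw hwy)) (mt Adj.symm hvy) (mt Adj.symm hwy) h2
  obtain ⟨w, hw, hwx⟩ :=
    (hK.1.insert_erase hv hy hKy).exists_not_adj (x := x) (by simp [hx, hxy.ne])
  obtain ⟨hwv, hwK⟩ : w ≠ v ∧ w ∈ K := by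
    rcases mem_insert.1 hw with rfl | hw
    · exact absurd hxy.symm hwx
    · exact mem_erase.1 hw
  have hwy := hKy w hwK hwv
  obtain ⟨z, hvz, hyz⟩ := hK.exists_adj_not_adj hv hx hy hxy hvx hKy
  by_cases hxz : G.Adj x z
  · by_cases hwz : G.Adj w z
    · exact not_free_cycleGraph_four hxy hwy.symm hwz hxz.symm (mt Adj.symm hwx) hyz
        (fun h => hx (h ▸ hwK)) (fun h => hvy (h ▸ hvz)) h4
    · exact not_free_cycleGraph_five hxy hwy.symm (hK.1.isClique hwK hv hwv) hvz hxz.symm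
        (mt Adj.symm hwx) (mt Adj.symm hvx) (mt Adj.symm hvy) hyz hwz h5
  · exact not_free_twoP2 hxy hvz (mt Adj.symm hvx) hxz (mt Adj.symm hvy) hyz h2

lemma IsOptimalClique.isIndepSet_compl (h4 : _root_.Free (cycleGraph 4) G)
    (h5 : _root_.Free (cycleGraph 5) G) (h2 : _root_.Free twoP2 G) (hK : G.IsOptimalClique K) :
    _root_.IsIndepSet G (Kᶜ : Finset V) := by
  intro x hx y hy _ hxy
  rw [mem_coe, mem_compl] at hx hy
  by_cases hyx : ∀ u ∈ K, ¬ G.Adj u y → ¬ G.Adj u x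
  · exact hK.not_adj h4 h5 h2 hx hy hyx hxy
  push Not at hyx
  obtain ⟨u, hu, huy, hux⟩ := hyx
  refine hK.not_adj h4 h5 h2 hy hx (fun w hw hwx => ?_) hxy.symm
  by_contra! hwy
  exact not_free_cycleGraph_four hxy hwy.symm (hK.1.isClique hw hu fun h => hwx (h ▸ hux)) hux
    (mt Adj.symm hwx) (mt Adj.symm huy) (fun h => hx (h ▸ hw)) (fun h => hy (h ▸ hu)) h4

end OptimalClique

lemma isSplit_of_free [Fintype V] (h4 : _root_.Free (cycleGraph 4) G)
    (h5 : _root_.Free (cycleGraph 5) G) (h2 : _root_.Free twoP2 G) : G.IsSplit := by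
  classical
  obtain ⟨K, hK⟩ := G.exists_isOptimalClique
  exact ⟨K, hK.1.isClique, coe_compl K ▸ hK.isIndepSet_compl h4 h5 h2⟩

end SimpleGraph

/-- A finite graph is a split graph iff it has no induced `C4`, `C5` or `2P2`. -/
theorem split_iff_c4_c5_2p2_free {V : Type*} [Fintype V] (G : SimpleGraph V) :
    (∃ K I : Set V, (∀ v, v ∈ K ∨ v ∈ I) ∧ (∀ v, ¬ (v ∈ K ∧ v ∈ I)) ∧
      G.IsClique K ∧ _root_.IsIndepSet G I) ↔
    (_root_.Free (cycleGraph 4) G ∧ _root_.Free (cycleGraph 5) G ∧ _root_.Free twoP2 G) := by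
  rw [← isSplit_iff_exists_partition]
  refine ⟨fun hG => ⟨?_, ?_, ?_⟩, fun ⟨h4, h5, h2⟩ => isSplit_of_free h4 h5 h2⟩
  · exact hG.free not_isSplit_cycleGraph_four
  · exact hG.free not_isSplit_cycleGraph_five
  · exact hG.free not_isSplit_twoP2
end

section
/- Every connected paw-free graph is either triangle-free or complete multipartite. -/
open SimpleGraph

/-!
In a paw-free graph every neighbour of a triangle vertex `v` is adjacent to a second vertex of
that triangle, so the edge to it lies in a triangle; spreading along walks, in a connected
paw-free graph with one triangle every edge lies in a triangle `xyt`. Being complete multipartite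
means that no vertex `v` misses both ends of an edge `xy`. Follow a walk from `x` to `v` and let
`w` be its first step: if `v ~ w`, paw-freeness applied to the triangles `xyt`, `wxy` and `wxt`
forces `v` to be adjacent to `x` or `y`; otherwise `v` misses both ends of the edge `wx`, which
is one step closer to `v` along the walk.
-/

namespace SimpleGraph

variable {V : Type*} {G : SimpleGraph V}

lemma adj_or_adj_of_pawFree (hf : _root_.Free paw G) {a b c v : V} (hab : G.Adj a b)
    (hac : G.Adj a c) (hbc : G.Adj b c) (hva : G.Adj v a) : G.Adj v b ∨ G.Adj v c := by
  by_contra! ⟨hvb, hvc⟩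
  have hvb' : v ≠ b := fun h => hvc (h ▸ hbc)
  have hvc' : v ≠ c := fun h => hvb (h ▸ hbc.symm)
  refine hf.false ⟨⟨![b, c, a, v], fun i j h => ?_⟩, fun {i j} => ?_⟩
  · fin_cases i <;> fin_cases j <;>
      simp_all [hab.ne, hac.ne, hbc.ne, hva.ne, hab.ne', hac.ne', hbc.ne', hva.ne']
  · change G.Adj (![b, c, a, v] i) (![b, c, a, v] j) ↔ paw.Adj i j
    fin_cases i <;> fin_cases j <;>
      simp [paw, fromRel_adj, hab, hac, hbc, hva, hvb, hvc, hab.symm, hac.symm, hbc.symm,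
        hva.symm, mt G.adj_symm hvb, mt G.adj_symm hvc]

def IsInTriangle (G : SimpleGraph V) (v : V) : Prop :=
  ∃ p q, G.Adj v p ∧ G.Adj v q ∧ G.Adj p q

lemma IsInTriangle.exists_adj_adj_of_adj (hf : _root_.Free paw G) {v x : V}
    (hv : G.IsInTriangle v) (hvx : G.Adj v x) : ∃ t, G.Adj v t ∧ G.Adj x t := by
  obtain ⟨p, q, hvp, hvq, hpq⟩ := hv
  obtain hxp | hxq := adj_or_adj_of_pawFree hf hvp hvq hpq hvx.symm
  · exact ⟨p, hvp, hxp⟩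
  · exact ⟨q, hvq, hxq⟩

lemma IsInTriangle.of_adj (hf : _root_.Free paw G) {v x : V} (hv : G.IsInTriangle v)
    (hvx : G.Adj v x) : G.IsInTriangle x :=
  let ⟨t, hvt, hxt⟩ := hv.exists_adj_adj_of_adj hf hvx
  ⟨v, t, hvx.symm, hxt, hvt⟩

lemma IsInTriangle.of_reachable (hf : _root_.Free paw G) {u v : V} (hu : G.IsInTriangle u)
    (huv : G.Reachable u v) : G.IsInTriangle v := by
  obtain ⟨p⟩ := huv
  induction p with
  | nil => exact hu
  | cons h _ ih => exact ih (hu.of_adj hf h)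

lemma adj_or_adj_of_adj_adj_of_triangle (hf : _root_.Free paw G) {v w x y t : V} (hxy : G.Adj x y)
    (hxt : G.Adj x t) (hyt : G.Adj y t) (hwx : G.Adj w x) (hvw : G.Adj v w) :
    G.Adj v x ∨ G.Adj v y := by
  obtain hwy | hwt := adj_or_adj_of_pawFree hf hxy hxt hyt hwx
  · exact adj_or_adj_of_pawFree hf hwx hwy hxy hvw
  · obtain hvx | hvt := adj_or_adj_of_pawFree hf hwx hwt hxt hvw
    · exact Or.inl hvx
    · exact adj_or_adj_of_pawFree hf hxt.symm hyt.symm hxy hvt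

lemma adj_or_adj_of_walk (hf : _root_.Free paw G)
    (htri : ∀ x y, G.Adj x y → ∃ t, G.Adj x t ∧ G.Adj y t) {x v : V} (p : G.Walk x v)
    {y : V} (hxy : G.Adj x y) : G.Adj v x ∨ G.Adj v y := by
  induction p generalizing y with
  | nil => exact Or.inr hxy
  | cons hxw _ ih =>
    obtain hvw | hvx := ih hxw.symm
    · obtain ⟨t, hxt, hyt⟩ := htri _ _ hxy
      exact adj_or_adj_of_adj_adj_of_triangle hf hxy hxt hyt hxw.symm hvw
    · exact Or.inl hvx

lemma isCompleteMultipartite_of_pawFree (hc : G.Preconnected) (hf : _root_.Free paw G)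
    (htri : ∀ x y, G.Adj x y → ∃ t, G.Adj x t ∧ G.Adj y t) : G.IsCompleteMultipartite :=
  ⟨fun u v _ huv hvw huw =>
    (adj_or_adj_of_walk hf htri (hc u v).some huw).elim (fun h => huv h.symm) hvw⟩

end SimpleGraph

/-- Every connected paw-free graph is triangle-free or complete multipartite. -/
theorem pawFree_triangleFree_or_completeMultipartite {V : Type*}
    (G : SimpleGraph V) (hc : G.Connected) (hf : _root_.Free paw G) :
    G.CliqueFree 3 ∨ ∃ s : Setoid V, ∀ u v, G.Adj u v ↔ ¬ s.r u v := by
  classical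
  refine or_iff_not_imp_left.mpr fun htf => ?_
  obtain ⟨s, hs⟩ := not_forall_not.mp htf
  obtain ⟨a, b, c, hab, hac, hbc, -⟩ := is3Clique_iff.mp hs
  have ha : G.IsInTriangle a := ⟨b, c, hab, hac, hbc⟩
  have htri (x y : V) (hxy : G.Adj x y) : ∃ t, G.Adj x t ∧ G.Adj y t :=
    (ha.of_reachable hf (hc.preconnected a x)).exists_adj_adj_of_adj hf hxy
  have hG := isCompleteMultipartite_of_pawFree hc.preconnected hf htri
  exact ⟨hG.setoid, fun u v => not_not.symm⟩
end

section
/- Every connected chordal graph with no induced paw is either a tree or a complete split graph. -/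
open SimpleGraph

/-! If `G` has no triangle, every edge `uv` is a bridge: otherwise a shortest `u`–`v` path
avoiding `uv` closes up with `uv` to an induced cycle, which in a chordal graph must be a
triangle. So `G` is a tree.

If `G` has a triangle, paw-freeness pushes triangles along edges until every edge lies in one.
Together with the absence of induced `C₄`, this rules out induced `P₄`s, so two non-adjacent
vertices with a common neighbour have nested neighbourhoods. Then `G` has diameter two and
non-adjacency is transitive, i.e. `G` is complete multipartite. In a chordal complete
multipartite graph two parts with two vertices each would span an induced `C₄`, so at most one
part is not a singleton: the singletons form the clique and that part the independent set. -/

namespace SimpleGraph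

variable {V : Type*} {G : SimpleGraph V}

lemma cycleGraph_adj_iff_val_s3 {n : ℕ} {a b : Fin (n + 2)} :
    (cycleGraph (n + 2)).Adj a b ↔ a.val = b.val + 1 ∨ b.val = a.val + 1 ∨
      (a.val = 0 ∧ b.val = n + 1) ∨ (a.val = n + 1 ∧ b.val = 0) := by
  have ha := a.isLt
  have hb := b.isLt
  rw [cycleGraph_adj']
  rcases lt_trichotomy a b with h | rfl | h
  · rw [Fin.coe_sub_iff_lt.mpr h, Fin.sub_val_of_le h.le]
    have := Fin.lt_def.mp h
    omega
  · simp only [sub_self, Fin.val_zero]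
    omega
  · rw [Fin.coe_sub_iff_lt.mpr h, Fin.sub_val_of_le h.le]
    have := Fin.lt_def.mp h
    omega

lemma Preconnected.induction_on_adj (hG : G.Preconnected) {P : V → Prop}
    (hstep : ∀ ⦃x y⦄, G.Adj x y → P x → P y) {a : V} (ha : P a) (v : V) : P v := by
  obtain ⟨p⟩ := hG a v
  induction p with
  | nil => exact ha
  | cons h _ ih => exact ih (hstep h ha)

lemma Preconnected.exists_adj_adj_of_not_adj (hG : G.Preconnected)
    (hsub : ∀ ⦃a b x⦄, G.Adj a x → G.Adj x b → a ≠ b → ¬ G.Adj a b →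
      G.neighborSet a ⊆ G.neighborSet b) {x y : V} (hne : x ≠ y) (hxy : ¬ G.Adj x y) :
    ∃ z, G.Adj x z ∧ G.Adj z y := by
  revert hne hxy
  refine hG.induction_on_adj (P := fun y => x ≠ y → ¬ G.Adj x y → ∃ z, G.Adj x z ∧ G.Adj z y)
    (fun y y' hyy' hy _ hxy' => ?_) (fun h => absurd rfl h) y
  by_cases hxy : G.Adj x y
  · exact ⟨y, hxy, hyy'⟩
  by_cases hne : x = y
  · exact absurd (hne ▸ hyy') hxy'
  obtain ⟨z, hxz, hzy⟩ := hy hne hxy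
  exact absurd (hsub hzy.symm hxz.symm (Ne.symm hne) (fun h => hxy h.symm) hyy') hxy'

namespace Walk

variable {u v : V} {p : G.Walk u v}

lemma dist_getVert_of_length_eq_dist (hp : p.length = G.dist u v) {i : ℕ}
    (hi : i ≤ p.length) : G.dist u (p.getVert i) = i := by
  rw [← length_eq_dist_of_subwalk hp (p.isSubwalk_take i), take_length]
  omega

lemma getVert_injOn_of_length_eq_dist (hp : p.length = G.dist u v) :
    Set.InjOn p.getVert {i | i ≤ p.length} := fun i hi j hj h => by
  rw [← dist_getVert_of_length_eq_dist hp hi, ← dist_getVert_of_length_eq_dist hp hj, h]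

lemma adj_getVert_iff_of_length_eq_dist (hp : p.length = G.dist u v) {i j : ℕ}
    (hi : i ≤ p.length) (hj : j ≤ p.length) :
    G.Adj (p.getVert i) (p.getVert j) ↔ i = j + 1 ∨ j = i + 1 := by
  refine ⟨fun h => ?_, ?_⟩
  · have hle {k l : ℕ} (hk : k ≤ p.length) (hl : l ≤ p.length)
        (hkl : G.Adj (p.getVert k) (p.getVert l)) : l ≤ k + 1 := by
      have := G.dist_le ((p.take k).concat hkl)
      rwa [dist_getVert_of_length_eq_dist hp hl, length_concat, take_length,
        min_eq_left hk] at this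
    have hne : i ≠ j := by rintro rfl; exact h.ne rfl
    have := hle hi hj h
    have := hle hj hi h.symm
    omega
  · rintro (rfl | rfl)
    · exact (p.adj_getVert_succ (by omega)).symm
    · exact p.adj_getVert_succ (by omega)

end Walk

end SimpleGraph

section

variable {V : Type*} {G : SimpleGraph V}

lemma Chordal.adj_or_adj_of_cycle4 (hch : Chordal G) {a b c d : V} (hab : G.Adj a b)
    (hbc : G.Adj b c) (hcd : G.Adj c d) (hda : G.Adj d a) (hac : a ≠ c) (hbd : b ≠ d) :
    G.Adj a c ∨ G.Adj b d := by
  by_contra! ⟨hnac, hnbd⟩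
  have hinj : Function.Injective ![a, b, c, d] := by
    intro i j hij
    fin_cases i <;> fin_cases j <;> simp at hij ⊢ <;> grind [Adj.ne]
  refine (hch 4 le_rfl).false ⟨⟨_, hinj⟩, fun {i j} => ?_⟩
  fin_cases i <;> fin_cases j <;>
    simp [cycleGraph_adj, hab, hbc, hcd, hda, hab.symm, hbc.symm, hcd.symm, hda.symm, hnac, hnbd,
      G.adj_comm c a, G.adj_comm d b] <;> decide

lemma adj_or_adj_of_free_paw (hf : _root_.Free paw G) {a b c d : V} (hab : G.Adj a b)
    (hac : G.Adj a c) (hbc : G.Adj b c) (hcd : G.Adj c d) : G.Adj a d ∨ G.Adj b d := by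
  by_contra! ⟨had, hbd⟩
  have hinj : Function.Injective ![a, b, c, d] := by
    intro i j hij
    fin_cases i <;> fin_cases j <;> simp at hij ⊢ <;> grind [Adj.ne, adj_comm]
  refine hf.false ⟨⟨_, hinj⟩, fun {i j} => ?_⟩
  fin_cases i <;> fin_cases j <;>
    simp [paw, hab, hac, hbc, hcd, hab.symm, hac.symm, hbc.symm, hcd.symm, had, hbd, G.adj_comm d]

/-- A shortest `u`–`v` path avoiding the edge `uv` closes up with `uv` to an induced cycle. -/
lemma Chordal.length_le_two_of_length_eq_dist (hch : Chordal G) {u v : V} (huv : G.Adj u v)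
    {p : (G.deleteEdges {s(u, v)}).Walk u v}
    (hp : p.length = (G.deleteEdges {s(u, v)}).dist u v) : p.length ≤ 2 := by
  by_contra! hlen
  obtain ⟨m, hm⟩ : ∃ m, p.length = m + 1 := ⟨p.length - 1, by omega⟩
  have hinj := p.getVert_injOn_of_length_eq_dist hp
  have hend {k : ℕ} (hk : k ≤ p.length) :
      (p.getVert k = u ↔ k = 0) ∧ (p.getVert k = v ↔ k = p.length) := by
    refine ⟨⟨fun h => hinj hk (Nat.zero_le _) (h.trans p.getVert_zero.symm), ?_⟩,
      ⟨fun h => hinj hk (le_refl p.length) (h.trans p.getVert_length.symm), ?_⟩⟩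
    · rintro rfl; exact p.getVert_zero
    · rintro rfl; exact p.getVert_length
  have hadj {k l : ℕ} (hk : k ≤ p.length) (hl : l ≤ p.length) :
      G.Adj (p.getVert k) (p.getVert l) ↔
        k = l + 1 ∨ l = k + 1 ∨ (k = 0 ∧ l = p.length) ∨ (k = p.length ∧ l = 0) := by
    have hH := p.adj_getVert_iff_of_length_eq_dist hp hk hl
    rw [deleteEdges_adj, Set.mem_singleton_iff, Sym2.eq_iff, (hend hk).1, (hend hk).2,
      (hend hl).1, (hend hl).2] at hH
    by_cases he : (k = 0 ∧ l = p.length) ∨ (k = p.length ∧ l = 0)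
    · rcases he with ⟨rfl, rfl⟩ | ⟨rfl, rfl⟩
      · simpa using huv
      · simpa using huv.symm
    · simp only [he, not_false_eq_true, and_true] at hH
      rw [hH]
      tauto
  have hinj' : Function.Injective fun k : Fin (m + 2) => p.getVert k :=
    fun k l h => Fin.ext (hinj (by grind) (by grind) h)
  refine (hch (m + 2) (by omega)).false ⟨⟨_, hinj'⟩, fun {k l} => ?_⟩
  simp only [Function.Embedding.coeFn_mk]
  rw [cycleGraph_adj_iff_val_s3, hadj (by omega) (by omega), hm]

lemma Chordal.exists_adj_adj_of_not_isBridge (hch : Chordal G) {u v : V} (huv : G.Adj u v)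
    (hb : ¬ G.IsBridge s(u, v)) : ∃ w, G.Adj u w ∧ G.Adj w v := by
  rw [isBridge_iff, not_not] at hb
  obtain ⟨p, hp⟩ := hb.exists_walk_length_eq_dist
  have h0 : p.length ≠ 0 := by
    rw [hp, Ne, hb.dist_eq_zero_iff]
    exact huv.ne
  have h1 : p.length ≠ 1 := by
    rw [hp, Ne, dist_eq_one_iff_adj]
    simp
  have h2 := hch.length_le_two_of_length_eq_dist huv hp
  refine ⟨p.getVert 1, ?_, ?_⟩
  · simpa using (p.adj_getVert_succ (i := 0) (by omega)).1
  · have h12 := (p.adj_getVert_succ (i := 1) (by omega)).1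
    rwa [show 1 + 1 = p.length by omega, p.getVert_length] at h12

lemma Chordal.isAcyclic_of_cliqueFree (hch : Chordal G) (h3 : G.CliqueFree 3) : G.IsAcyclic := by
  classical
  refine isAcyclic_iff_forall_adj_isBridge.mpr fun u v huv => by_contra fun hb => ?_
  obtain ⟨w, huw, hwv⟩ := hch.exists_adj_adj_of_not_isBridge huv hb
  exact h3 {u, w, v} (is3Clique_triple_iff.mpr ⟨huw, huv, hwv⟩)

lemma exists_adj_adj_of_free_paw (hG : G.Preconnected) (hf : _root_.Free paw G) {a b c : V}
    (hab : G.Adj a b) (hac : G.Adj a c) (hbc : G.Adj b c) :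
    ∀ ⦃u v⦄, G.Adj u v → ∃ w, G.Adj u w ∧ G.Adj v w := by
  have hvert : ∀ x, ∃ y z, G.Adj x y ∧ G.Adj x z ∧ G.Adj y z := by
    refine hG.induction_on_adj (fun x y hxy ⟨p, q, hxp, hxq, hpq⟩ => ?_) ⟨b, c, hab, hac, hbc⟩
    rcases adj_or_adj_of_free_paw hf hpq hxp.symm hxq.symm hxy with hpy | hqy
    · exact ⟨x, p, hxy.symm, hpy.symm, hxp⟩
    · exact ⟨x, q, hxy.symm, hqy.symm, hxq⟩
  intro u v huv
  obtain ⟨p, q, hup, huq, hpq⟩ := hvert u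
  rcases adj_or_adj_of_free_paw hf hpq hup.symm huq.symm huv with hpv | hqv
  · exact ⟨p, hup, hpv.symm⟩
  · exact ⟨q, huq, hqv.symm⟩

lemma adj_or_adj_of_path4 (hch : Chordal G) (hf : _root_.Free paw G)
    (htri : ∀ ⦃u v⦄, G.Adj u v → ∃ w, G.Adj u w ∧ G.Adj v w) {x u v y : V}
    (hxu : G.Adj x u) (huv : G.Adj u v) (hvy : G.Adj v y) (hxv : x ≠ v) (huy : u ≠ y) :
    G.Adj x v ∨ G.Adj u y := by
  by_contra! ⟨hnxv, hnuy⟩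
  by_cases hxy : G.Adj x y
  · exact absurd (hch.adj_or_adj_of_cycle4 hxu huv hvy hxy.symm hxv huy) (by tauto)
  obtain ⟨w, huw, hvw⟩ := htri huv
  have hwx : G.Adj w x :=
    (adj_or_adj_of_free_paw hf hvw.symm huw.symm huv.symm hxu.symm).resolve_right
      (fun h => hnxv h.symm)
  have hwy : G.Adj w y :=
    (adj_or_adj_of_free_paw hf huw.symm hvw.symm huv hvy).resolve_right hnuy
  rcases adj_or_adj_of_free_paw hf hxu.symm huw hwx.symm hwy with h | h
  · exact hnuy h
  · exact hxy h

lemma neighborSet_subset_of_adj_of_adj (hch : Chordal G) (hf : _root_.Free paw G)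
    (htri : ∀ ⦃u v⦄, G.Adj u v → ∃ w, G.Adj u w ∧ G.Adj v w) {a b x : V}
    (hax : G.Adj a x) (hxb : G.Adj x b) (hne : a ≠ b) (hnab : ¬ G.Adj a b) :
    G.neighborSet a ⊆ G.neighborSet b := by
  intro c (hac : G.Adj a c)
  by_cases hcx : c = x
  · exact hcx ▸ hxb.symm
  have hcx' : G.Adj c x :=
    (adj_or_adj_of_path4 hch hf htri hac.symm hax hxb hcx hne).resolve_right hnab
  exact ((adj_or_adj_of_free_paw hf hac hax hcx' hxb).resolve_left hnab).symm

lemma isCompleteMultipartite_of_free_paw (hG : G.Preconnected) (hch : Chordal G)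
    (hf : _root_.Free paw G) {a b c : V} (hab : G.Adj a b) (hac : G.Adj a c) (hbc : G.Adj b c) :
    G.IsCompleteMultipartite := by
  have htri := exists_adj_adj_of_free_paw hG hf hab hac hbc
  refine ⟨fun x y z hxy hyz hxz => ?_⟩
  have hne : x ≠ y := by rintro rfl; exact hyz hxz
  obtain ⟨w, hxw, hwy⟩ := hG.exists_adj_adj_of_not_adj
    (fun _ _ _ => neighborSet_subset_of_adj_of_adj hch hf htri) hne hxy
  exact hyz (neighborSet_subset_of_adj_of_adj hch hf htri hxw hwy hne hxy hxz)

lemma SimpleGraph.IsCompleteMultipartite.isCompleteSplit (h : G.IsCompleteMultipartite)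
    (hch : Chordal G) : IsCompleteSplit G := by
  refine ⟨{v | ∀ w, w ≠ v → G.Adj v w}, {v | ∀ w, w ≠ v → G.Adj v w}ᶜ, fun v => em _,
    fun v hv => hv.2 hv.1, fun u hu v _ huv => hu v huv.symm, ?_,
    fun k hk i hi => hk i fun h => hi (h ▸ hk)⟩
  intro u hu v hv huv hadj
  simp only [Set.mem_compl_iff, Set.mem_ofPred_eq, not_forall] at hu hv
  obtain ⟨p, hpu, hup⟩ := hu
  obtain ⟨q, hqv, hvq⟩ := hv
  have hvp : G.Adj v p := by
    by_contra hvp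
    exact h.trans u p v hup (fun h' => hvp h'.symm) hadj
  have huq : G.Adj u q := by
    by_contra huq
    exact h.trans v q u hvq (fun h' => huq h'.symm) hadj.symm
  have hpq : G.Adj p q := by
    by_contra hpq
    exact h.trans u p q hup hpq huq
  rcases hch.adj_or_adj_of_cycle4 hadj hvp hpq huq.symm hpu.symm hqv.symm with h' | h'
  · exact hup h'
  · exact hvq h'

end

/-- Every connected paw-free chordal graph is a tree or a complete split graph. -/
theorem pawFree_chordal_tree_or_completeSplit {V : Type*}
    (G : SimpleGraph V) (hc : G.Connected) (hch : Chordal G) (hf : _root_.Free paw G) :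
    G.IsTree ∨ IsCompleteSplit G := by
  classical
  by_cases h3 : G.CliqueFree 3
  · exact Or.inl ⟨hc, hch.isAcyclic_of_cliqueFree h3⟩
  · obtain ⟨s, hs⟩ : ∃ s, G.IsNClique 3 s := by simpa [CliqueFree] using h3
    obtain ⟨a, b, c, hab, hac, hbc, -⟩ := is3Clique_iff.mp hs
    have hmp := isCompleteMultipartite_of_free_paw hc.preconnected hch hf hab hac hbc
    exact Or.inr (hmp.isCompleteSplit hch)
end

section
/- If G is a disconnected (P1+paw)-free chordal graph, then every connected component of G is either a tree or a complete split graph. -/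
open SimpleGraph

namespace PawProof

open SimpleGraph Walk


variable {V : Type*} {G : SimpleGraph V}

lemma path_getVert_inj {u v : V} {p : G.Walk u v} (hp : p.IsPath) :
    ∀ {i j : ℕ}, i ≤ p.length → j ≤ p.length → p.getVert i = p.getVert j → i = j := by
  induction p with
  | nil => intro i j hi hj _; simp only [length_nil, Nat.le_zero] at hi hj; omega
  | @cons u x v h q ih =>
    intro i j hi hj hij
    rw [cons_isPath_iff] at hp
    match i, j with
    | 0, 0 => rfl
    | 0, (j+1) =>
      exfalso
      apply hp.2
      rw [mem_support_iff_exists_getVert]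
      refine ⟨j, ?_, by simpa using hj⟩
      simpa [getVert_cons_succ] using hij.symm
    | (i+1), 0 =>
      exfalso
      apply hp.2
      rw [mem_support_iff_exists_getVert]
      refine ⟨i, ?_, by simpa using hi⟩
      simpa [getVert_cons_succ] using hij
    | (i+1), (j+1) =>
      have := ih hp.1 (by simpa using hi) (by simpa using hj)
        (by simpa [getVert_cons_succ] using hij)
      omega

lemma cycle_getVert_inj {u : V} {c : G.Walk u u} (hc : c.IsCycle)
    {i j : ℕ} (hi : i < c.length) (hj : j < c.length) (h : c.getVert i = c.getVert j) :
    i = j := by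
  cases c with
  | nil => simp at hi
  | @cons u x v hadj q =>
    rw [cons_isCycle_iff] at hc
    simp only [length_cons] at hi hj
    match i, j with
    | 0, 0 => rfl
    | 0, (j+1) =>
      exfalso
      have h1 : q.getVert j = q.getVert q.length := by
        rw [getVert_length]
        simpa [getVert_cons_succ] using h.symm
      have := path_getVert_inj hc.1 (by omega) le_rfl h1
      omega
    | (i+1), 0 =>
      exfalso
      have h1 : q.getVert i = q.getVert q.length := by
        rw [getVert_length]
        simpa [getVert_cons_succ] using h
      have := path_getVert_inj hc.1 (by omega) le_rfl h1
      omega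
    | (i+1), (j+1) =>
      have := path_getVert_inj hc.1 (i := i) (j := j) (by omega) (by omega)
        (by simpa [getVert_cons_succ] using h)
      omega

lemma chord_mem_edges {u : V} {c : G.Walk u u} (hc : c.IsCycle)
    (hmin : ∀ (a : V) (w : G.Walk a a), w.IsCycle → c.length ≤ w.length)
    {x y : V} (hx : x ∈ c.support) (hy : y ∈ c.support) (hxy : G.Adj x y) :
    s(x, y) ∈ c.edges := by
  by_contra hne
  haveI := Classical.decEq V
  have hc' : (c.rotate x hx).IsCycle := hc.rotate hx
  have hxs : s(x, y) ∉ (c.rotate x hx).edges := fun h => hne ((rotate_edges c x hx).mem_iff.mp h)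
  have hlen : (c.rotate x hx).length = c.length := by
    have := (rotate_darts c x hx).perm.length_eq
    simpa [length_darts] using this
  have hy' : y ∈ (c.rotate x hx).support := by
    unfold Walk.rotate
    rw [mem_support_append_iff]
    rw [← take_spec c hx, mem_support_append_iff] at hy
    tauto
  rcases hcq : c.rotate x hx with _ | ⟨hadj2, q2⟩
  · rw [hcq] at hc'; exact hc'.not_of_nil
  · rename_i b
    rw [hcq] at hc' hxs hlen hy'
    rw [cons_isCycle_iff] at hc'
    have hyq2 : y ∈ q2.support := by
      rcases List.mem_cons.mp (by simpa only [support_cons] using hy') with h | h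
      · exact absurd h.symm hxy.ne
      · exact h
    have hepath : (q2.dropUntil y hyq2).IsPath := hc'.1.dropUntil hyq2
    have hnewc : (Walk.cons hxy (q2.dropUntil y hyq2)).IsCycle := by
      rw [cons_isCycle_iff]
      refine ⟨hepath, fun hmem => ?_⟩
      apply hxs
      rw [edges_cons]
      exact List.mem_cons_of_mem _ (edges_dropUntil_subset q2 hyq2 hmem)
    have hlen2 : (q2.takeUntil y hyq2).length + (q2.dropUntil y hyq2).length = q2.length := by
      conv_rhs => rw [← take_spec q2 hyq2]
      rw [length_append]
    have htpos : (q2.takeUntil y hyq2).length ≠ 0 := by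
      intro h0
      have hb : b = y := eq_of_length_eq_zero h0
      apply hxs
      rw [edges_cons]
      exact List.mem_cons.mpr (Or.inl (by rw [hb]))
    have hle := hmin x (Walk.cons hxy (q2.dropUntil y hyq2)) hnewc
    rw [length_cons] at hle
    have hcl : q2.length + 1 = c.length := by rw [← hlen, length_cons]
    omega

lemma nat_consec {n i j : ℕ} (hn : 2 ≤ n) (hi : i < n) (hj : j < n) :
    (j + (n - i)) % n = 1 ↔ j = (i + 1) % n := by
  rcases lt_or_ge (j + (n - i)) n with hlt | hge
  · rw [Nat.mod_eq_of_lt hlt]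
    constructor
    · intro h1
      have hi1 : i + 1 = n := by omega
      rw [hi1, Nat.mod_self]; omega
    · intro h1
      rcases Nat.lt_or_ge (i + 1) n with h2 | h2
      · rw [Nat.mod_eq_of_lt h2] at h1; omega
      · have hi1 : i + 1 = n := by omega
        rw [hi1, Nat.mod_self] at h1; omega
  · rw [Nat.mod_eq_sub_mod hge, Nat.mod_eq_of_lt (by omega)]
    constructor
    · intro h1
      have hj1 : j = i + 1 := by omega
      rw [hj1, Nat.mod_eq_of_lt (by omega)]
    · intro h1
      rcases Nat.lt_or_ge (i + 1) n with h2 | h2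
      · rw [Nat.mod_eq_of_lt h2] at h1; omega
      · have hi1 : i + 1 = n := by omega
        rw [hi1, Nat.mod_self] at h1; omega

lemma cycleGraph_adj_of_consec {n : ℕ} (hn : 3 ≤ n) {i j : Fin n}
    (h : j.val = (i.val + 1) % n) : (cycleGraph n).Adj i j := by
  rw [cycleGraph_adj']
  right
  rw [Fin.sub_def]
  simp only []
  rw [Nat.add_comm (n - i.val) j.val]
  exact (nat_consec (by omega) i.isLt j.isLt).mpr h

lemma exists_cycleGraph_embedding {W : Type*} {H : SimpleGraph W} (h : ¬ H.IsAcyclic) :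
    ∃ n, 3 ≤ n ∧ Nonempty (cycleGraph n ↪g H) := by
  obtain ⟨a, c, hc, hg⟩ := exists_egirth_eq_length.mpr h
  have hmin : ∀ (b : W) (w : H.Walk b b), w.IsCycle → c.length ≤ w.length := by
    intro b w hw
    have h1 : H.egirth ≤ w.length := le_egirth.mp le_rfl b w hw
    rw [hg] at h1
    exact_mod_cast h1
  have hn3 : 3 ≤ c.length := hc.three_le_length
  refine ⟨c.length, hn3, ⟨⟨⟨fun i => c.getVert i.val, fun i j hij => ?_⟩, @fun i j => ?_⟩⟩⟩
  · exact Fin.ext (cycle_getVert_inj hc i.isLt j.isLt hij)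
  · change H.Adj (c.getVert i.val) (c.getVert j.val) ↔ (cycleGraph c.length).Adj i j
    constructor
    · intro hadj
      have hmem : s(c.getVert i.val, c.getVert j.val) ∈ c.edges := by
        refine chord_mem_edges hc hmin ?_ ?_ hadj
        · exact mem_support_iff_exists_getVert.mpr ⟨i.val, rfl, by omega⟩
        · exact mem_support_iff_exists_getVert.mpr ⟨j.val, rfl, by omega⟩
      have htsub : c.toSubgraph.Adj (c.getVert i.val) (c.getVert j.val) :=
        Subgraph.mem_edgeSet.mp ((c.mem_edges_toSubgraph).mpr hmem)
      rw [toSubgraph_adj_iff] at htsub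
      obtain ⟨k, hkeq, hklt⟩ := htsub
      rw [Sym2.eq_iff] at hkeq
      have hstep : ∀ i' j' : Fin c.length, c.getVert k = c.getVert i'.val →
          c.getVert (k + 1) = c.getVert j'.val → (cycleGraph c.length).Adj i' j' := by
        intro i' j' h1 h2
        have hki : k = i'.val := cycle_getVert_inj hc hklt i'.isLt h1
        rcases Nat.lt_or_ge (k + 1) c.length with h3 | h3
        · have hkj : k + 1 = j'.val := cycle_getVert_inj hc h3 j'.isLt h2
          exact cycleGraph_adj_of_consec hn3 (by rw [← hkj, ← hki, Nat.mod_eq_of_lt h3])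
        · have hk1 : k + 1 = c.length := by omega
          rw [hk1, getVert_length] at h2
          have h0 : c.getVert 0 = c.getVert j'.val := by
            rw [getVert_zero]; exact h2
          have hj0 : (0 : ℕ) = j'.val := cycle_getVert_inj hc (by omega) j'.isLt h0
          refine cycleGraph_adj_of_consec hn3 ?_
          rw [← hj0, ← hki, hk1, Nat.mod_self]
      rcases hkeq with ⟨h1, h2⟩ | ⟨h1, h2⟩
      · exact hstep i j h1 h2
      · exact (hstep j i h1 h2).symm
    · intro hadj
      have key : ∀ m : ℕ, m < c.length → H.Adj (c.getVert m) (c.getVert ((m + 1) % c.length)) := by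
        intro m hm
        rcases Nat.lt_or_ge (m + 1) c.length with h1 | h1
        · rw [Nat.mod_eq_of_lt h1]; exact c.adj_getVert_succ hm
        · have hm1 : m + 1 = c.length := by omega
          have h2 := c.adj_getVert_succ hm
          rw [hm1, getVert_length] at h2
          rw [hm1, Nat.mod_self, getVert_zero]
          exact h2
      rw [cycleGraph_adj'] at hadj
      rcases hadj with h1 | h1
      · rw [Fin.sub_def] at h1
        simp only [] at h1
        rw [Nat.add_comm (c.length - j.val) i.val] at h1
        have := (nat_consec (by omega) j.isLt i.isLt).mp h1
        have h2 := key j.val j.isLt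
        rw [← this] at h2
        exact h2.symm
      · rw [Fin.sub_def] at h1
        simp only [] at h1
        rw [Nat.add_comm (c.length - i.val) j.val] at h1
        have := (nat_consec (by omega) i.isLt j.isLt).mp h1
        have h2 := key i.val i.isLt
        rw [← this] at h2
        exact h2



open SimpleGraph Walk

variable {V : Type*} {G : SimpleGraph V}

lemma paw_emb (hf : _root_.Free p1Paw G) {z a b c d : V}
    (hza : z ≠ a) (hzb : z ≠ b) (hzc : z ≠ c) (hzd : z ≠ d)
    (nza : ¬ G.Adj z a) (nzb : ¬ G.Adj z b) (nzc : ¬ G.Adj z c) (nzd : ¬ G.Adj z d)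
    (hab : G.Adj a b) (hac : G.Adj a c) (hbc : G.Adj b c) (hcd : G.Adj c d)
    (nad : ¬ G.Adj a d) (nbd : ¬ G.Adj b d) (had : a ≠ d) (hbd : b ≠ d) : False := by
  have hfE : IsEmpty (p1Paw ↪g G) := hf
  apply hfE.false
  have hba := hab.symm; have hca := hac.symm; have hcb := hbc.symm; have hdc := hcd.symm
  refine ⟨⟨![z, a, b, c, d], ?_⟩, @fun i j => ?_⟩
  · intro i j hij
    have h1 := hab.ne; have h2 := hac.ne; have h3 := hbc.ne; have h4 := hcd.ne
    fin_cases i <;> fin_cases j <;> simp_all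
  · change G.Adj (![z, a, b, c, d] i) (![z, a, b, c, d] j) ↔ p1Paw.Adj i j
    fin_cases i <;> fin_cases j <;>
      simp_all [p1Paw, SimpleGraph.fromRel_adj, G.adj_comm]

section Component

variable {S : Set V} {z : V}

lemma pawS (hf : _root_.Free p1Paw G) (hS : ∀ {a b : V}, G.Adj a b → a ∈ S → b ∈ S)
    (hz : z ∉ S) {a b c d : V} (ha : a ∈ S)
    (hab : G.Adj a b) (hac : G.Adj a c) (hbc : G.Adj b c) (hcd : G.Adj c d)
    (nad : ¬ G.Adj a d) (nbd : ¬ G.Adj b d) (had : a ≠ d) (hbd : b ≠ d) : False := by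
  have hb : b ∈ S := hS hab ha
  have hc : c ∈ S := hS hac ha
  have hd : d ∈ S := hS hcd hc
  have hne : ∀ {w : V}, w ∈ S → z ≠ w := fun hw heq => hz (heq ▸ hw)
  have hnadj : ∀ {w : V}, w ∈ S → ¬ G.Adj z w := fun hw hadj => hz (hS hadj.symm hw)
  exact paw_emb hf (hne ha) (hne hb) (hne hc) (hne hd)
    (hnadj ha) (hnadj hb) (hnadj hc) (hnadj hd) hab hac hbc hcd nad nbd had hbd

lemma tri_prop (hf : _root_.Free p1Paw G) (hS : ∀ {a b : V}, G.Adj a b → a ∈ S → b ∈ S)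
    (hz : z ∉ S) {x y : V} (hx : x ∈ S)
    (ht : ∃ a b, G.Adj x a ∧ G.Adj x b ∧ G.Adj a b) (hxy : G.Adj x y) :
    ∃ a b, G.Adj y a ∧ G.Adj y b ∧ G.Adj a b := by
  obtain ⟨a, b, hxa, hxb, hab⟩ := ht
  by_cases hya : y = a
  · subst hya; exact ⟨x, b, hxy.symm, hab, hxb⟩
  by_cases hyb : y = b
  · subst hyb; exact ⟨x, a, hxy.symm, hab.symm, hxa⟩
  by_cases h1 : G.Adj y a
  · exact ⟨x, a, hxy.symm, h1, hxa⟩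
  by_cases h2 : G.Adj y b
  · exact ⟨x, b, hxy.symm, h2, hxb⟩
  exact (pawS hf hS hz (hS hxa hx) hab hxa.symm hxb.symm hxy
    (fun h => h1 h.symm) (fun h => h2 h.symm) (fun h => hya h.symm)
    (fun h => hyb h.symm)).elim

lemma tri_walk (hf : _root_.Free p1Paw G) (hS : ∀ {a b : V}, G.Adj a b → a ∈ S → b ∈ S)
    (hz : z ∉ S) {x y : V} (p : G.Walk x y) (hx : x ∈ S)
    (ht : ∃ a b, G.Adj x a ∧ G.Adj x b ∧ G.Adj a b) :
    ∃ a b, G.Adj y a ∧ G.Adj y b ∧ G.Adj a b := by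
  induction p with
  | nil => exact ht
  | @cons x m y h q ih => exact ih (hS h hx) (tri_prop hf hS hz hx ht h)

lemma edge_tri (hf : _root_.Free p1Paw G) (hS : ∀ {a b : V}, G.Adj a b → a ∈ S → b ∈ S)
    (hz : z ∉ S) {x y : V} (hx : x ∈ S)
    (ht : ∃ a b, G.Adj x a ∧ G.Adj x b ∧ G.Adj a b) (hxy : G.Adj x y) :
    ∃ t, G.Adj x t ∧ G.Adj y t := by
  obtain ⟨a, b, hxa, hxb, hab⟩ := ht
  by_cases hya : y = a
  · subst hya; exact ⟨b, hxb, hab⟩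
  by_cases hyb : y = b
  · subst hyb; exact ⟨a, hxa, hab.symm⟩
  by_cases h1 : G.Adj y a
  · exact ⟨a, hxa, h1⟩
  by_cases h2 : G.Adj y b
  · exact ⟨b, hxb, h2⟩
  exact (pawS hf hS hz (hS hxa hx) hab hxa.symm hxb.symm hxy
    (fun h => h1 h.symm) (fun h => h2 h.symm) (fun h => hya h.symm)
    (fun h => hyb h.symm)).elim

lemma no_bad_triple (hf : _root_.Free p1Paw G) (hS : ∀ {a b : V}, G.Adj a b → a ∈ S → b ∈ S)
    (hz : z ∉ S)
    (hT : ∀ {a b : V}, a ∈ S → G.Adj a b → ∃ t, G.Adj a t ∧ G.Adj b t) :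
    ∀ (n : ℕ) {x y w : V} (p : G.Walk w x), p.length ≤ n → x ∈ S → G.Adj x y →
      ¬ G.Adj w x → ¬ G.Adj w y → w ≠ x → w ≠ y → False := by
  intro n
  induction n with
  | zero =>
    intro x y w p hlen hx hxy nwx nwy hwx hwy
    exact hwx (eq_of_length_eq_zero (Nat.le_zero.mp hlen))
  | succ n ih =>
    intro x y w p hlen hx hxy nwx nwy hwx hwy
    rcases hq : p.reverse with _ | @⟨_, m, _, hxm, r⟩
    · exact absurd rfl hwx
    · have hrlen : r.length ≤ n := by
        have h1 : p.reverse.length = p.length := length_reverse p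
        rw [hq, length_cons] at h1
        omega
      have hm : m ∈ S := hS hxm hx
      by_cases hmw : m = w
      · subst hmw; exact nwx hxm.symm
      by_cases hmy : m = y
      · subst hmy
        exact ih r.reverse (by rwa [length_reverse]) (hS hxy hx) hxy.symm nwy nwx hwy hwx
      by_cases hwm : G.Adj w m
      · by_cases hmy2 : G.Adj m y
        · exact pawS hf hS hz hx hxy hxm hmy2.symm hwm.symm
              (fun h => nwx h.symm) (fun h => nwy h.symm)
              (fun h => hwx h.symm) (fun h => hwy h.symm)
        · obtain ⟨t, hxt, hyt⟩ := hT hx hxy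
          have hmt : m ≠ t := fun h => hmy2 (h ▸ hyt.symm)
          by_cases hmt2 : G.Adj m t
          · by_cases hwt : G.Adj w t
            · exact pawS hf hS hz hx hxy hxt hyt hwt.symm
                (fun h => nwx h.symm) (fun h => nwy h.symm)
                (fun h => hwx h.symm) (fun h => hwy h.symm)
            · refine pawS hf hS hz hx hxt hxm hmt2.symm hwm.symm
                (fun h => nwx h.symm) (fun h => hwt h.symm)
                (fun h => hwx h.symm) (fun h => ?_)
              exact nwy (h ▸ hyt.symm)
          · exact pawS hf hS hz (hS hxy hx) hyt hxy.symm hxt.symm hxm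
              (fun h => hmy2 h.symm) (fun h => hmt2 h.symm)
              (fun h => hmy h.symm) (fun h => hmt h.symm)
      · exact ih r.reverse (by rwa [length_reverse]) hm hxm.symm hwm nwx
            (fun h => hmw h.symm) hwx

end Component


lemma c4_emb (hch : Chordal G) {a b c d : V} (hab : G.Adj a b) (hbc : G.Adj b c)
    (hcd : G.Adj c d) (hda : G.Adj d a) (nac : ¬ G.Adj a c) (nbd : ¬ G.Adj b d)
    (hac : a ≠ c) (hbd : b ≠ d) : False := by
  have hfE : IsEmpty (cycleGraph 4 ↪g G) := hch 4 le_rfl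
  apply hfE.false
  have hba := hab.symm; have hcb := hbc.symm; have hdc := hcd.symm; have had := hda.symm
  refine ⟨⟨![a, b, c, d], ?_⟩, @fun i j => ?_⟩
  · intro i j hij
    have h1 := hab.ne; have h2 := hbc.ne; have h3 := hcd.ne; have h4 := hda.ne
    fin_cases i <;> fin_cases j <;> simp_all
  · change G.Adj (![a, b, c, d] i) (![a, b, c, d] j) ↔ (cycleGraph 4).Adj i j
    fin_cases i <;> fin_cases j <;>
      simp_all [SimpleGraph.cycleGraph_adj, G.adj_comm] <;> decide


lemma reach_induce {V : Type*} {G : SimpleGraph V} {S : Set V}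
    (hS : ∀ {a b : V}, G.Adj a b → a ∈ S → b ∈ S) :
    ∀ {a b : V} (_ : G.Walk a b) (ha : a ∈ S) (hb : b ∈ S),
      (G.induce S).Reachable ⟨a, ha⟩ ⟨b, hb⟩ := by
  intro a b p
  induction p with
  | nil => intro ha hb; exact SimpleGraph.Reachable.refl _
  | @cons a m b h q ih =>
    intro ha hb
    have hm : m ∈ S := hS h ha
    have hadj : (G.induce S).Adj ⟨a, ha⟩ ⟨m, hm⟩ := h
    exact hadj.reachable.trans (ih hm hb)

end PawProof


open PawProof in
/-- In a disconnected `(P1+paw)`-free chordal graph, every connected component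
induces a tree or a complete split graph. -/
theorem p1PawFree_chordal_disconnected_components {V : Type*}
    (G : SimpleGraph V) (hch : Chordal G) (hf : _root_.Free p1Paw G)
    (hdisc : ∃ u v : V, ¬ G.Reachable u v) :
    ∀ v : V, (G.induce {u | G.Reachable u v}).IsTree ∨
      IsCompleteSplit (G.induce {u | G.Reachable u v}) := by
  intro v
  set S : Set V := {u | G.Reachable u v} with hSdef
  have hS : ∀ {a b : V}, G.Adj a b → a ∈ S → b ∈ S :=
    fun hab ha => (hab.symm.reachable).trans ha
  have hvS : v ∈ S := SimpleGraph.Reachable.refl v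
  obtain ⟨u1, u2, hu⟩ := hdisc
  have hzex : ∃ z, z ∉ S := by
    by_cases h1 : u1 ∈ S
    · exact ⟨u2, fun h2 => hu (Reachable.trans h1 h2.symm)⟩
    · exact ⟨u1, h1⟩
  obtain ⟨z, hz⟩ := hzex
  by_cases htri : ∃ x ∈ S, ∃ a b, G.Adj x a ∧ G.Adj x b ∧ G.Adj a b
  · right
    obtain ⟨x0, hx0S, tri0⟩ := htri
    have hall : ∀ {x : V}, x ∈ S → ∃ a b, G.Adj x a ∧ G.Adj x b ∧ G.Adj a b := by
      intro x hx
      obtain ⟨p⟩ : G.Reachable x0 x := Reachable.trans hx0S hx.symm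
      exact tri_walk hf hS hz p hx0S tri0
    have hT : ∀ {a b : V}, a ∈ S → G.Adj a b → ∃ t, G.Adj a t ∧ G.Adj b t :=
      fun ha hab => edge_tri hf hS hz ha (hall ha) hab
    have NBT : ∀ {x y w : V}, x ∈ S → w ∈ S → G.Adj x y → ¬ G.Adj w x → ¬ G.Adj w y →
        w ≠ x → w ≠ y → False := by
      intro x y w hx hw hxy nwx nwy hwx hwy
      obtain ⟨p⟩ : G.Reachable w x := Reachable.trans hw hx.symm
      exact no_bad_triple hf hS hz hT p.length p le_rfl hx hxy nwx nwy hwx hwy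
    refine ⟨{x : S | ∀ y : S, y ≠ x → G.Adj ↑x ↑y},
      {x : S | ¬ ∀ y : S, y ≠ x → G.Adj ↑x ↑y}, fun x => em _, fun x h => h.2 h.1, ?_, ?_, ?_⟩
    · intro x hx y hy hne
      exact hx y (Ne.symm hne)
    · intro x hx y hy hne hadj
      have hadj' : G.Adj ↑x ↑y := hadj
      simp only [Set.mem_setOf_eq, not_forall] at hx hy
      obtain ⟨x', hx'ne, hx'nadj⟩ := hx
      obtain ⟨y', hy'ne, hy'nadj⟩ := hy
      by_cases hA : G.Adj ↑x' ↑y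
      · by_cases hB1 : G.Adj ↑y' ↑x
        · by_cases hB2 : G.Adj ↑x' ↑y'
          · refine c4_emb hch hB1.symm hB2.symm hA hadj'.symm hx'nadj
              (fun h => hy'nadj h.symm) ?_ ?_
            · exact fun h => hx'ne (Subtype.ext h.symm)
            · exact fun h => hy'ne (Subtype.ext h)
          · exact NBT x.2 x'.2 hB1.symm (fun h => hx'nadj h.symm) hB2
              (fun h => hx'ne (Subtype.ext h)) (fun h => hx'nadj (h ▸ hB1.symm))
        · exact NBT x.2 y'.2 hadj' hB1 (fun h => hy'nadj h.symm)
            (fun h => hy'nadj (h ▸ hadj'.symm)) (fun h => hy'ne (Subtype.ext h))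
      · exact NBT x.2 x'.2 hadj' (fun h => hx'nadj h.symm) hA
          (fun h => hx'ne (Subtype.ext h)) (fun h => hx'nadj (h ▸ hadj'))
    · intro k hk i hi
      have hik : (i : S) ≠ k := fun h => hi (h ▸ hk)
      exact hk i hik
  · left
    constructor
    · have hne : Nonempty (↥S) := ⟨⟨v, hvS⟩⟩
      refine { preconnected := ?_, nonempty := hne }
      intro x y
      obtain ⟨p⟩ : G.Reachable ↑x ↑y := Reachable.trans x.2 y.2.symm
      exact reach_induce hS p x.2 y.2
    · by_contra hcyc
      obtain ⟨n, hn3, ⟨e⟩⟩ := exists_cycleGraph_embedding hcyc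
      rcases Nat.lt_or_ge n 4 with h4 | h4
      · have hn : n = 3 := by omega
        subst hn
        apply htri
        have h01 : (G.induce S).Adj (e 0) (e 1) := e.map_rel_iff.mpr (by decide)
        have h02 : (G.induce S).Adj (e 0) (e 2) := e.map_rel_iff.mpr (by decide)
        have h12 : (G.induce S).Adj (e 1) (e 2) := e.map_rel_iff.mpr (by decide)
        exact ⟨↑(e 0), (e 0).2, ↑(e 1), ↑(e 2), h01, h02, h12⟩
      · have hE : IsEmpty (cycleGraph n ↪g G) := hch n h4
        exact hE.false ((SimpleGraph.Embedding.induce S).comp e)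
end

section
/- Let G be a chordal graph, let K be a clique in G, let s be a vertex not in K with exactly one non-neighbour v in K, and let t be a vertex not in K with exactly two non-neighbours in K. If s and t are adjacent, then v is also a non-neighbour of t (i.e., s and t share a common non-neighbour in K). -/
open SimpleGraph

/-! If `t` were adjacent to `v`, take a non-neighbour `w ≠ t` of `t` in `K`. Then `w ≠ v`, so
`s` is adjacent to `w`, and `s t v w` is a 4-cycle with neither chord `sv` nor `tw`. -/

namespace Chordal

variable {V : Type*} {G : SimpleGraph V} {a b c d : V}

theorem adj_or_adj_of_cycle_four (hG : Chordal G) (hab : G.Adj a b) (hbc : G.Adj b c)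
    (hcd : G.Adj c d) (hda : G.Adj d a) (hac : a ≠ c) (hbd : b ≠ d) :
    G.Adj a c ∨ G.Adj b d := by
  by_contra! hchord
  obtain ⟨hnac, hnbd⟩ := hchord
  have hnca : ¬ G.Adj c a := fun h => hnac h.symm
  have hndb : ¬ G.Adj d b := fun h => hnbd h.symm
  have hinj : Function.Injective ![a, b, c, d] := by
    intro i j hij
    fin_cases i <;> fin_cases j <;>
      simp_all [hab.ne, hbc.ne, hcd.ne, hda.ne, hab.ne.symm, hbc.ne.symm, hcd.ne.symm,
        hda.ne.symm, hac.symm, hbd.symm]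
  refine (hG 4 le_rfl).false ⟨⟨_, hinj⟩, fun {i j} => ?_⟩
  fin_cases i <;> fin_cases j <;>
    simp [cycleGraph_adj, hab, hbc, hcd, hda, hab.symm, hbc.symm, hcd.symm, hda.symm, hnac,
      hnbd, hnca, hndb] <;> decide

end Chordal

theorem chordal_common_nonNeighbour_general {V : Type*}
    (G : SimpleGraph V) (hch : Chordal G) (K : Set V) (hK : G.IsClique K)
    (s t v : V) (hs : s ∉ K)
    (hs1 : {x ∈ K | ¬ G.Adj s x} = {v})
    (ht2 : {x ∈ K | ¬ G.Adj t x}.ncard = 2)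
    (hst : G.Adj s t) :
    ¬ G.Adj t v := by
  intro htv
  simp only [Set.ext_iff, Set.mem_ofPred_eq, Set.mem_singleton_iff] at hs1
  obtain ⟨hvK, hsv⟩ := (hs1 v).2 rfl
  obtain ⟨w, ⟨hwK, htw⟩, hwt⟩ := Set.exists_ne_of_one_lt_ncard (ht2 ▸ one_lt_two) t
  have hvw : v ≠ w := by rintro rfl; exact htw htv
  have hsw : G.Adj s w := by
    by_contra h
    exact hvw ((hs1 w).1 ⟨hwK, h⟩).symm
  have hsv' : s ≠ v := by rintro rfl; exact hs hvK
  exact (hch.adj_or_adj_of_cycle_four hst htv (hK hvK hwK hvw) hsw.symm hsv' hwt.symm).elim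
    hsv htw

/-- In a chordal graph, if `s` outside a clique `K` has exactly one non-neighbour
`v` in `K`, and `t` outside `K` has exactly two non-neighbours in `K`, and `s`
and `t` are adjacent, then `v` is also a non-neighbour of `t`. -/
theorem chordal_common_nonNeighbour {V : Type*}
    (G : SimpleGraph V) (hch : Chordal G) (K : Set V) (hK : G.IsClique K)
    (s t v : V) (hs : s ∉ K) (ht : t ∉ K)
    (hs1 : {x ∈ K | ¬ G.Adj s x} = {v})
    (ht2 : {x ∈ K | ¬ G.Adj t x}.ncard = 2)
    (hst : G.Adj s t) :
    ¬ G.Adj t v :=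
  chordal_common_nonNeighbour_general G hch K hK s t v hs hs1 ht2 hst
end

section
/- Let G be a (2P2, C5, S_{1,1,2})-free graph containing an induced net with end-vertices a1,a2,a3 and mid-vertices b1,b2,b3 (edges: the triangle b1b2b3 and aibi for each i). If a vertex x outside the net has exactly three neighbours among the net vertices, then either x is adjacent to all three mid-vertices, or x is adjacent to exactly one end-vertex ai and the two mid-vertices bj, bk with j,k distinct from i. -/
open SimpleGraph

/-
The three net neighbours of `x` contain at most one end-vertex. If `x` sees an end `a i` and misses
`a m`, then `x` sees `b m`, for otherwise `x a i` and `a m b m` form an induced `2P2`. If `x` sees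
two ends `a i, a j`, then for the third index `m` it sees both or neither of `a m, b m`, for
otherwise `x` is the centre of a chair with leaves `a i, a j` and pendant path through `a m b m`;
by the first observation it sees both, hence four net vertices. So `x` sees no end, and then all
three mid-vertices, or exactly one end `a i`, and then `b j, b k` and, by counting, not `b i`.
-/

namespace SimpleGraph

theorem not_free_of_injective_of_adj_iff {α β : Type*} {H : SimpleGraph α} {G : SimpleGraph β}
    (f : α → β) (hf : f.Injective) (hadj : ∀ i j, G.Adj (f i) (f j) ↔ H.Adj i j) :
    ¬_root_.Free H G :=
  fun h => h.false ⟨⟨f, hf⟩, hadj _ _⟩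

variable {V : Type*} {G : SimpleGraph V}

theorem not_free_twoP2_s8 {u v w z : V} (huv : G.Adj u v) (hwz : G.Adj w z)
    (huw : ¬G.Adj u w) (huz : ¬G.Adj u z) (hvw : ¬G.Adj v w) (hvz : ¬G.Adj v z) :
    ¬_root_.Free twoP2 G := by
  have huw' : u ≠ w := by rintro rfl; exact huz hwz
  have huz' : u ≠ z := by rintro rfl; exact huw hwz.symm
  have hvw' : v ≠ w := by rintro rfl; exact hvz hwz
  have hvz' : v ≠ z := by rintro rfl; exact hvw hwz.symm
  refine not_free_of_injective_of_adj_iff ![u, v, w, z] (fun i j hij => ?_) (fun i j => ?_)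
  · fin_cases i <;> fin_cases j <;> simp_all [huv.ne, hwz.ne, huv.ne.symm, hwz.ne.symm]
  · fin_cases i <;> fin_cases j <;>
      simp [twoP2, huv, hwz, huv.symm, hwz.symm, huw, huz, hvw, hvz, G.adj_comm w, G.adj_comm z]

theorem not_free_chair {c l₁ l₂ p q : V} (hl : l₁ ≠ l₂)
    (hcl₁ : G.Adj c l₁) (hcl₂ : G.Adj c l₂) (hcp : G.Adj c p) (hpq : G.Adj p q)
    (hl₁l₂ : ¬G.Adj l₁ l₂) (hl₁p : ¬G.Adj l₁ p) (hl₂p : ¬G.Adj l₂ p)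
    (hcq : ¬G.Adj c q) (hl₁q : ¬G.Adj l₁ q) (hl₂q : ¬G.Adj l₂ q) :
    ¬_root_.Free chair G := by
  have hl₁p' : l₁ ≠ p := by rintro rfl; exact hl₁q hpq
  have hl₂p' : l₂ ≠ p := by rintro rfl; exact hl₂q hpq
  have hcq' : c ≠ q := by rintro rfl; exact hl₁q hcl₁.symm
  have hl₁q' : l₁ ≠ q := by rintro rfl; exact hl₁p hpq.symm
  have hl₂q' : l₂ ≠ q := by rintro rfl; exact hl₂p hpq.symm
  refine not_free_of_injective_of_adj_iff ![c, l₁, l₂, p, q] (fun i j hij => ?_) (fun i j => ?_)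
  · fin_cases i <;> fin_cases j <;>
      simp_all [hcl₁.ne, hcl₂.ne, hcp.ne, hpq.ne, hcl₁.ne.symm, hcl₂.ne.symm, hcp.ne.symm, hpq.ne.symm]
  · fin_cases i <;> fin_cases j <;>
      simp [chair, hcl₁, hcl₂, hcp, hpq, hcl₁.symm, hcl₂.symm, hcp.symm, hpq.symm, hl₁l₂, hl₁p, hl₂p,
        hcq, hl₁q, hl₂q, G.adj_comm l₂ l₁, G.adj_comm p, G.adj_comm q]

section Net

variable {ι : Type*} {a b : ι → V} {x : V}

theorem adj_mid_of_adj_end_of_not_adj_end (h2P2 : _root_.Free twoP2 G)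
    (haa : ∀ i j, ¬G.Adj (a i) (a j)) (hab : ∀ i j, G.Adj (a i) (b j) ↔ i = j) {i m : ι}
    (hxi : G.Adj x (a i)) (hxm : ¬G.Adj x (a m)) : G.Adj x (b m) := by
  by_contra hxb
  have him : i ≠ m := by rintro rfl; exact hxm hxi
  exact not_free_twoP2_s8 hxi ((hab m m).2 rfl) hxm hxb (haa i m) (mt (hab i m).1 him) h2P2

theorem adj_end_iff_adj_mid_of_adj_two_ends (hchair : _root_.Free chair G)
    (haa : ∀ i j, ¬G.Adj (a i) (a j)) (hab : ∀ i j, G.Adj (a i) (b j) ↔ i = j)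
    (ha : a.Injective) {i j m : ι} (hij : i ≠ j) (him : i ≠ m) (hjm : j ≠ m)
    (hxi : G.Adj x (a i)) (hxj : G.Adj x (a j)) : G.Adj x (a m) ↔ G.Adj x (b m) := by
  have hab_m : G.Adj (a m) (b m) := (hab m m).2 rfl
  have hib : ¬G.Adj (a i) (b m) := mt (hab i m).1 him
  have hjb : ¬G.Adj (a j) (b m) := mt (hab j m).1 hjm
  constructor
  · intro hxa
    by_contra hxb
    exact not_free_chair (ha.ne hij) hxi hxj hxa hab_m (haa i j) (haa i m) (haa j m) hxb hib hjb
      hchair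
  · intro hxb
    by_contra hxa
    exact not_free_chair (ha.ne hij) hxi hxj hxb hab_m.symm (haa i j) hib hjb hxa (haa i m)
      (haa j m) hchair

end Net

theorem four_le_ncard_of_adj_two_ends {a b : Fin 3 → V} {x : V} (h2P2 : _root_.Free twoP2 G)
    (hchair : _root_.Free chair G) (haa : ∀ i j, ¬G.Adj (a i) (a j))
    (hab : ∀ i j, G.Adj (a i) (b j) ↔ i = j) (ha : a.Injective) {i j : Fin 3} (hij : i ≠ j)
    (hxi : G.Adj x (a i)) (hxj : G.Adj x (a j)) :
    4 ≤ {k | G.Adj x (a k)}.ncard + {k | G.Adj x (b k)}.ncard := by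
  obtain ⟨m, him, hjm⟩ : ∃ m, i ≠ m ∧ j ≠ m := by
    have hthird : ∀ i j : Fin 3, ∃ m, i ≠ m ∧ j ≠ m := by decide
    exact hthird i j
  have hm := adj_end_iff_adj_mid_of_adj_two_ends hchair haa hab ha hij him hjm hxi hxj
  have hxb : G.Adj x (b m) := by
    by_contra hxb
    exact hxb (adj_mid_of_adj_end_of_not_adj_end h2P2 haa hab hxi (mt hm.1 hxb))
  have hA : 3 ≤ {k | G.Adj x (a k)}.ncard :=
    (Set.ncard_eq_three.2 ⟨i, j, m, hij, him, hjm, rfl⟩).symm.le.trans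
      (Set.ncard_le_ncard (by simp [Set.insert_subset_iff, hxi, hxj, hm.2 hxb]))
  have hB : 1 ≤ {k | G.Adj x (b k)}.ncard := (Set.ncard_pos).2 ⟨m, hxb⟩
  omega

end SimpleGraph

theorem net_three_neighbours_general {V : Type*} (G : SimpleGraph V)
    (h2P2 : _root_.Free twoP2 G) (hchair : _root_.Free chair G)
    (a b : Fin 3 → V)
    (hinj : Function.Injective (Sum.elim a b : Fin 3 ⊕ Fin 3 → V))
    (haa : ∀ i j, ¬ G.Adj (a i) (a j))
    (hab : ∀ i j, G.Adj (a i) (b j) ↔ i = j)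
    (x : V)
    (hcount : {i | G.Adj x (a i)}.ncard + {i | G.Adj x (b i)}.ncard = 3) :
    (∀ i, G.Adj x (b i)) ∨
      ∃ i, (∀ j, G.Adj x (a j) ↔ j = i) ∧ (∀ j, G.Adj x (b j) ↔ j ≠ i) := by
  have ha : Function.Injective a := hinj.comp Sum.inl_injective
  have hA : {i | G.Adj x (a i)}.Subsingleton := fun i hi j hj => by
    by_contra hij
    have := four_le_ncard_of_adj_two_ends h2P2 hchair haa hab ha hij hi hj
    omega
  rcases hA.eq_empty_or_singleton with hA | ⟨i, hA⟩
  · rw [hA, Set.ncard_empty, zero_add] at hcount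
    have hB : {i | G.Adj x (b i)} = Set.univ :=
      Set.eq_of_subset_of_ncard_le (Set.subset_univ _) (by rw [hcount]; simp)
    exact Or.inl (Set.eq_univ_iff_forall.1 hB)
  · have hai : ∀ j, G.Adj x (a j) ↔ j = i := fun j => Set.ext_iff.1 hA j
    have hbj : ∀ j, j ≠ i → G.Adj x (b j) := fun j hj =>
      adj_mid_of_adj_end_of_not_adj_end h2P2 haa hab ((hai i).2 rfl) (mt (hai j).1 hj)
    have hbi : ¬G.Adj x (b i) := by
      intro hxb
      have hB : {j | G.Adj x (b j)} = Set.univ := Set.eq_univ_of_forall fun j => by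
        rcases eq_or_ne j i with rfl | hj
        exacts [hxb, hbj j hj]
      simp [hA, hB] at hcount
    exact Or.inr ⟨i, hai, fun j => ⟨fun hxb hji => hbi (hji ▸ hxb), hbj j⟩⟩

/-- If a vertex outside an induced net in a `(2P2, C5, S_{1,1,2})`-free graph has
exactly three neighbours among the net vertices, then it is adjacent to all three
mid-vertices, or to exactly one end-vertex `a i` and the two mid-vertices `b j`
with `j ≠ i`. -/
theorem net_three_neighbours {V : Type*} (G : SimpleGraph V)
    (h2P2 : _root_.Free twoP2 G) (hC5 : _root_.Free (cycleGraph 5) G) (hchair : _root_.Free chair G)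
    (a b : Fin 3 → V)
    (hinj : Function.Injective (Sum.elim a b : Fin 3 ⊕ Fin 3 → V))
    (hbb : ∀ i j, i ≠ j → G.Adj (b i) (b j))
    (haa : ∀ i j, ¬ G.Adj (a i) (a j))
    (hab : ∀ i j, G.Adj (a i) (b j) ↔ i = j)
    (x : V) (hx : ∀ i, x ≠ a i ∧ x ≠ b i)
    (hcount : {i | G.Adj x (a i)}.ncard + {i | G.Adj x (b i)}.ncard = 3) :
    (∀ i, G.Adj x (b i)) ∨
      ∃ i, (∀ j, G.Adj x (a j) ↔ j = i) ∧ (∀ j, G.Adj x (b j) ↔ j ≠ i) :=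
  net_three_neighbours_general G h2P2 hchair a b hinj haa hab x hcount
end

section
/- Let G be a (2P2, C5, S_{1,1,2})-free graph containing an induced net with end-vertices a1,a2,a3 and mid-vertices b1,b2,b3. If a vertex x outside the net has exactly four neighbours among the net vertices, then x is adjacent to exactly one end-vertex and to all three mid-vertices. -/
open SimpleGraph

/-
Suppose x sees two end-vertices a i, a j, and let k be the third index. If x missed both a k
and b k, the edges x a i and a k b k would form an induced 2P2; if x saw b k but not a k, then
x with leaves a i, a j and tail x b k a k would be an induced chair. So x sees all three
end-vertices, and then for each j the chair centred at x with leaves the other two end-vertices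
and tail x a j b j forces x to see b j: x sees all six net vertices. Hence x sees at most one
end-vertex, and four neighbours force one end-vertex and all three mid-vertices.
-/

theorem Free.false_of_induced_twoP2 {V : Type*} {G : SimpleGraph V} (h : _root_.Free twoP2 G)
    {u v w z : V} (huw : u ≠ w) (huz : u ≠ z) (hvw : v ≠ w) (hvz : v ≠ z)
    (huv : G.Adj u v) (hwz : G.Adj w z)
    (nuw : ¬G.Adj u w) (nuz : ¬G.Adj u z) (nvw : ¬G.Adj v w) (nvz : ¬G.Adj v z) : False := by
  have := huv.ne
  have := hwz.ne
  refine h.false ⟨⟨![u, v, w, z], fun i j hij => ?_⟩, @fun i j => ?_⟩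
  · fin_cases i <;> fin_cases j <;> simp_all
  · change G.Adj (![u, v, w, z] i) (![u, v, w, z] j) ↔ twoP2.Adj i j
    fin_cases i <;> fin_cases j <;> simp_all [twoP2, G.adj_comm]

theorem Free.false_of_induced_chair {V : Type*} {G : SimpleGraph V} (h : _root_.Free chair G)
    {c l₁ l₂ p q : V} (hl : l₁ ≠ l₂) (hl₁p : l₁ ≠ p) (hl₁q : l₁ ≠ q) (hl₂p : l₂ ≠ p)
    (hl₂q : l₂ ≠ q) (hcq : c ≠ q)
    (hcl₁ : G.Adj c l₁) (hcl₂ : G.Adj c l₂) (hcp : G.Adj c p) (hpq : G.Adj p q)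
    (nl : ¬G.Adj l₁ l₂) (nl₁p : ¬G.Adj l₁ p) (nl₁q : ¬G.Adj l₁ q)
    (nl₂p : ¬G.Adj l₂ p) (nl₂q : ¬G.Adj l₂ q) (ncq : ¬G.Adj c q) : False := by
  have := hcl₁.ne
  have := hcl₂.ne
  have := hcp.ne
  have := hpq.ne
  refine h.false ⟨⟨![c, l₁, l₂, p, q], fun i j hij => ?_⟩, @fun i j => ?_⟩
  · fin_cases i <;> fin_cases j <;> simp_all
  · change G.Adj (![c, l₁, l₂, p, q] i) (![c, l₁, l₂, p, q] j) ↔ chair.Adj i j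
    fin_cases i <;> fin_cases j <;> simp_all [chair, G.adj_comm]

theorem Fin.exists_ne_ne_of_three (j : Fin 3) : ∃ i k : Fin 3, i ≠ k ∧ i ≠ j ∧ k ≠ j := by
  fin_cases j <;> decide

theorem Set.eq_singleton_and_eq_univ_of_ncard_add_eq {α : Type*} [Finite α] {s t : Set α}
    (hs : s.Subsingleton) (h : s.ncard + t.ncard = Nat.card α + 1) :
    (∃ i, s = {i}) ∧ t = Set.univ := by
  have hs₁ : s.ncard ≤ 1 := Set.ncard_le_one_iff_subsingleton.mpr hs
  have ht : t.ncard ≤ Nat.card α := t.ncard_le_card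
  refine ⟨Set.ncard_eq_one.mp (by omega), ?_⟩
  by_contra hne
  have := Set.ncard_lt_card hne
  omega

namespace Net

variable {V : Type*} {G : SimpleGraph V} {a b : Fin 3 → V} {x : V}
  (hinj : Function.Injective (Sum.elim a b : Fin 3 ⊕ Fin 3 → V))
  (haa : ∀ i j, ¬ G.Adj (a i) (a j)) (hab : ∀ i j, G.Adj (a i) (b j) ↔ i = j)
  (hx : ∀ i, x ≠ a i ∧ x ≠ b i)
include hinj haa hab hx

theorem adj_end_or_mid_of_adj_end (h2P2 : _root_.Free twoP2 G) {i k : Fin 3} (hki : k ≠ i)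
    (hxi : G.Adj x (a i)) : G.Adj x (a k) ∨ G.Adj x (b k) := by
  by_contra! hxk
  exact h2P2.false_of_induced_twoP2 (hx k).1 (hx k).2 (hinj.ne (Sum.inl_injective.ne hki.symm))
    (hinj.ne Sum.inl_ne_inr) hxi ((hab k k).mpr rfl) hxk.1 hxk.2 (haa i k)
    (fun h => hki ((hab i k).mp h).symm)

theorem adj_end_of_adj_mid (hchair : _root_.Free chair G) {i j k : Fin 3} (hij : i ≠ j)
    (hik : i ≠ k) (hjk : j ≠ k) (hxi : G.Adj x (a i)) (hxj : G.Adj x (a j))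
    (hxk : G.Adj x (b k)) : G.Adj x (a k) := by
  by_contra hxk'
  exact hchair.false_of_induced_chair (hinj.ne (Sum.inl_injective.ne hij))
    (hinj.ne Sum.inl_ne_inr) (hinj.ne (Sum.inl_injective.ne hik)) (hinj.ne Sum.inl_ne_inr)
    (hinj.ne (Sum.inl_injective.ne hjk)) (hx k).1 hxi hxj hxk ((hab k k).mpr rfl).symm
    (haa i j) (fun h => hik ((hab i k).mp h)) (haa i k) (fun h => hjk ((hab j k).mp h))
    (haa j k) hxk'

theorem adj_mid_of_forall_adj_end (hchair : _root_.Free chair G) (hxa : ∀ i, G.Adj x (a i))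
    (j : Fin 3) : G.Adj x (b j) := by
  obtain ⟨i, k, hik, hij, hkj⟩ := Fin.exists_ne_ne_of_three j
  by_contra hxj
  exact hchair.false_of_induced_chair (hinj.ne (Sum.inl_injective.ne hik))
    (hinj.ne (Sum.inl_injective.ne hij)) (hinj.ne Sum.inl_ne_inr)
    (hinj.ne (Sum.inl_injective.ne hkj)) (hinj.ne Sum.inl_ne_inr) (hx j).2 (hxa i) (hxa k)
    (hxa j) ((hab j j).mpr rfl) (haa i k) (haa i j) (fun h => hij ((hab i j).mp h))
    (haa k j) (fun h => hkj ((hab k j).mp h)) hxj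

theorem adj_all_of_adj_two_ends (h2P2 : _root_.Free twoP2 G) (hchair : _root_.Free chair G)
    {i j : Fin 3} (hij : i ≠ j) (hxi : G.Adj x (a i)) (hxj : G.Adj x (a j)) :
    ∀ k, G.Adj x (a k) ∧ G.Adj x (b k) := by
  have hxa : ∀ k, G.Adj x (a k) := by
    intro k
    by_cases hki : k = i
    · exact hki ▸ hxi
    by_cases hkj : k = j
    · exact hkj ▸ hxj
    exact (adj_end_or_mid_of_adj_end hinj haa hab hx h2P2 hki hxi).elim id
      (adj_end_of_adj_mid hinj haa hab hx hchair hij (Ne.symm hki) (Ne.symm hkj) hxi hxj)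
  exact fun k => ⟨hxa k, adj_mid_of_forall_adj_end hinj haa hab hx hchair hxa k⟩

end Net

theorem net_four_neighbours_general {V : Type*} (G : SimpleGraph V)
    (h2P2 : _root_.Free twoP2 G) (hchair : _root_.Free chair G)
    (a b : Fin 3 → V)
    (hinj : Function.Injective (Sum.elim a b : Fin 3 ⊕ Fin 3 → V))
    (haa : ∀ i j, ¬ G.Adj (a i) (a j))
    (hab : ∀ i j, G.Adj (a i) (b j) ↔ i = j)
    (x : V) (hx : ∀ i, x ≠ a i ∧ x ≠ b i)
    (hcount : {i | G.Adj x (a i)}.ncard + {i | G.Adj x (b i)}.ncard = 4) :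
    ∃ i, (∀ j, G.Adj x (a j) ↔ j = i) ∧ ∀ j, G.Adj x (b j) := by
  have hends : {i | G.Adj x (a i)}.Subsingleton := by
    intro i hxi j hxj
    by_contra hij
    have hall := Net.adj_all_of_adj_two_ends hinj haa hab hx h2P2 hchair hij hxi hxj
    have hA : {i | G.Adj x (a i)} = Set.univ := Set.eq_univ_of_forall fun k => (hall k).1
    have hB : {i | G.Adj x (b i)} = Set.univ := Set.eq_univ_of_forall fun k => (hall k).2
    simp [hA, hB] at hcount
  obtain ⟨⟨i, hA⟩, hB⟩ := Set.eq_singleton_and_eq_univ_of_ncard_add_eq hends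
    (by simpa using hcount)
  exact ⟨i, fun j => Set.ext_iff.mp hA j, fun j => Set.eq_univ_iff_forall.mp hB j⟩

/-- If a vertex outside an induced net in a `(2P2, C5, S_{1,1,2})`-free graph has
exactly four neighbours among the net vertices, then it is adjacent to exactly one
end-vertex and to all three mid-vertices. -/
theorem net_four_neighbours {V : Type*} (G : SimpleGraph V)
    (h2P2 : _root_.Free twoP2 G) (hC5 : _root_.Free (cycleGraph 5) G) (hchair : _root_.Free chair G)
    (a b : Fin 3 → V)
    (hinj : Function.Injective (Sum.elim a b : Fin 3 ⊕ Fin 3 → V))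
    (hbb : ∀ i j, i ≠ j → G.Adj (b i) (b j))
    (haa : ∀ i j, ¬ G.Adj (a i) (a j))
    (hab : ∀ i j, G.Adj (a i) (b j) ↔ i = j)
    (x : V) (hx : ∀ i, x ≠ a i ∧ x ≠ b i)
    (hcount : {i | G.Adj x (a i)}.ncard + {i | G.Adj x (b i)}.ncard = 4) :
    ∃ i, (∀ j, G.Adj x (a j) ↔ j = i) ∧ ∀ j, G.Adj x (b j) :=
  net_four_neighbours_general G h2P2 hchair a b hinj haa hab x hx hcount
end

section
/- Let G be a chordal graph, v a vertex of G, L1 the set of neighbours of v, and suppose L1 is a clique (v is simplicial). Let s and t be vertices outside L1 ∪ {v} that are non-adjacent to each other, and suppose G is (P1 + diamond)-free, where the diamond is K4 minus an edge. If t has at least two neighbours a, b in L1 with s non-adjacent to both a and b, then the vertices s, a, b, t, v induce a P1 + diamond in G, a contradiction; hence s is adjacent to all but at most one vertex of the L1-neighbourhood of t. -/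
open SimpleGraph

/-- `t` and `v` play the two non-adjacent tips of the diamond, which are twins there, so
unlike the other pairs they are not kept apart by the adjacency pattern. -/
def p1DiamondEmbedding {V : Type*} {G : SimpleGraph V} {s a b t v : V}
    (hab : G.Adj a b) (hat : G.Adj a t) (hbt : G.Adj b t) (hav : G.Adj a v) (hbv : G.Adj b v)
    (hsa : ¬ G.Adj s a) (hsb : ¬ G.Adj s b) (hst : ¬ G.Adj s t) (hsv : ¬ G.Adj s v)
    (htv : ¬ G.Adj t v) (htv_ne : t ≠ v) : p1Diamond ↪g G where
  toFun := ![s, a, b, t, v]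
  inj' := by
    intro i j h
    fin_cases i <;> fin_cases j <;> simp_all [G.adj_comm]
  map_rel_iff' := by
    intro i j
    change G.Adj (![s, a, b, t, v] i) (![s, a, b, t, v] j) ↔ _
    fin_cases i <;> fin_cases j <;> simp_all [p1Diamond, G.adj_comm]

theorem p1DiamondFree_chordal_simplicial_claim_general {V : Type*} (G : SimpleGraph V)
    (hf : _root_.Free p1Diamond G) (v : V)
    (hsimp : G.IsClique (G.neighborSet v))
    (s t : V) (hs : s ∉ G.neighborSet v ∪ {v}) (ht : t ∉ G.neighborSet v ∪ {v})
    (hst : ¬ G.Adj s t)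
    (a b : V) (ha : a ∈ G.neighborSet v) (hb : b ∈ G.neighborSet v) (hab : a ≠ b)
    (hta : G.Adj t a) (htb : G.Adj t b)
    (hsa : ¬ G.Adj s a) (hsb : ¬ G.Adj s b) :
    False := by
  have hab' : G.Adj a b := hsimp ha hb hab
  simp only [Set.mem_union, Set.mem_singleton_iff, mem_neighborSet, not_or] at hs ht ha hb
  exact hf.false <| p1DiamondEmbedding hab' hta.symm htb.symm ha.symm hb.symm hsa hsb hst
    (fun h => hs.1 h.symm) (fun h => ht.1 h.symm) ht.2

/-- In a `(P1+diamond)`-free chordal graph with simplicial vertex `v`, two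
non-adjacent vertices `s, t` outside `N(v) ∪ {v}` cannot have two distinct
vertices `a, b ∈ N(v)` both adjacent to `t` and both non-adjacent to `s`. -/
theorem p1DiamondFree_chordal_simplicial_claim {V : Type*} (G : SimpleGraph V)
    (hch : Chordal G) (hf : _root_.Free p1Diamond G) (v : V)
    (hsimp : G.IsClique (G.neighborSet v))
    (s t : V) (hs : s ∉ G.neighborSet v ∪ {v}) (ht : t ∉ G.neighborSet v ∪ {v})
    (hst : ¬ G.Adj s t)
    (a b : V) (ha : a ∈ G.neighborSet v) (hb : b ∈ G.neighborSet v) (hab : a ≠ b)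
    (hta : G.Adj t a) (htb : G.Adj t b)
    (hsa : ¬ G.Adj s a) (hsb : ¬ G.Adj s b) :
    False :=
  p1DiamondFree_chordal_simplicial_claim_general G hf v hsimp s t hs ht hst a b ha hb hab hta htb
    hsa hsb
end

section
/- Let G be a split graph with split partition (C, I) where C is a clique and I an independent set. If G is (P1 + paw)-free (the paw being the complement of P1+P3), then the bipartite graph obtained from G by removing all edges inside C contains no induced P2+P4, and in particular no induced S_{1,2,3}. -/
open SimpleGraph

/-!
Since `C` is a clique and its complement is independent in `G`, two vertices are adjacent in
`G` iff they are adjacent in the bipartite graph `B` or are distinct vertices of `C`.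
So an induced `P2+P4` in `B` induces in `G` the `P2+P4` plus a clique on its vertices in `C`.
Every edge of `B` crosses `C`, so one end `o` of the `P2` avoids `C` and is isolated, and the
path `a-b-c-d` can be oriented with `b, d ∈ C`: then `b, c, d` is a triangle with pendant `a`,
and `o` together with this paw is an induced `P1+paw` in `G`. Deleting the neighbour of the
centre on the longest branch of `S_{1,2,3}` leaves an induced `P2+P4`.
-/

namespace SimpleGraph

variable {V W : Type*}

def deleteEdgesWithin (G : SimpleGraph V) (C : Set V) : SimpleGraph V :=
  fromRel fun u v => G.Adj u v ∧ (u ∉ C ∨ v ∉ C)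

def cliqueOn (S : Set V) : SimpleGraph V :=
  fromRel fun u v => u ∈ S ∧ v ∈ S

variable {G : SimpleGraph V} {H : SimpleGraph W} {C : Set V} {u v : V}

theorem deleteEdgesWithin_adj :
    (G.deleteEdgesWithin C).Adj u v ↔ G.Adj u v ∧ (u ∉ C ∨ v ∉ C) := by
  rw [deleteEdgesWithin, fromRel_adj]
  constructor
  · rintro ⟨-, h | ⟨h, hvu⟩⟩
    exacts [h, ⟨h.symm, hvu.symm⟩]
  · exact fun h => ⟨h.1.ne, .inl h⟩

theorem cliqueOn_adj {S : Set V} : (cliqueOn S).Adj u v ↔ u ≠ v ∧ u ∈ S ∧ v ∈ S := by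
  simp only [cliqueOn, fromRel_adj, and_comm (a := v ∈ S), or_self]

theorem IsClique.adj_iff_deleteEdgesWithin_adj_or (hC : G.IsClique C) :
    G.Adj u v ↔ (G.deleteEdgesWithin C).Adj u v ∨ (u ≠ v ∧ u ∈ C ∧ v ∈ C) := by
  rw [deleteEdgesWithin_adj, ← not_and_or]
  by_cases hin : u ∈ C ∧ v ∈ C
  · simp only [hin, not_true, and_false, and_true, false_or]
    exact ⟨Adj.ne, hC hin.1 hin.2⟩
  · simp only [hin, not_false_eq_true, and_true, and_false, or_false]

theorem mem_iff_notMem_of_deleteEdgesWithin_adj (hI : _root_.IsIndepSet G Cᶜ)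
    (h : (G.deleteEdgesWithin C).Adj u v) : u ∈ C ↔ v ∉ C := by
  obtain ⟨hadj, hout⟩ := deleteEdgesWithin_adj.1 h
  exact ⟨fun hu => hout.resolve_left (not_not.2 hu),
    fun hv => by_contra fun hu => hI hu hv hadj.ne hadj⟩

def Embedding.supCliqueOnPreimage (hC : G.IsClique C) (f : H ↪g G.deleteEdgesWithin C) :
    H ⊔ cliqueOn (f ⁻¹' C) ↪g G where
  toEmbedding := f.toEmbedding
  map_rel_iff' {a b} := by
    simp only [RelEmbedding.coe_toEmbedding, hC.adj_iff_deleteEdgesWithin_adj_or, f.map_adj_iff,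
      f.injective.ne_iff, sup_adj, cliqueOn_adj, Set.mem_preimage]

theorem nonempty_embedding_of_adj_iff (f : W → V) (hf : f.Injective)
    (h : ∀ a b, G.Adj (f a) (f b) ↔ H.Adj a b) : Nonempty (H ↪g G) :=
  ⟨⟨⟨f, hf⟩, h _ _⟩⟩

end SimpleGraph

open SimpleGraph

theorem Free.of_embedding_left {α β γ : Type*} {H : SimpleGraph α} {H' : SimpleGraph β}
    {G : SimpleGraph γ} (e : H ↪g H') (h : _root_.Free H G) : _root_.Free H' G :=
  ⟨fun f => h.false (f.comp e)⟩

theorem nonempty_p2P4_embedding_s123 : Nonempty (p2P4 ↪g s123) :=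
  nonempty_embedding_of_adj_iff ![5, 6, 3, 2, 0, 1] (by decide)
    (by simp only [p2P4, s123, fromRel_adj]; decide)

theorem p2P4_bipartition_cases {S : Set (Fin 6)} (hS : ∀ i j, p2P4.Adj i j → (i ∈ S ↔ j ∉ S)) :
    S = {1, 3, 5} ∨ S = {0, 3, 5} ∨ S = {1, 2, 4} ∨ S = {0, 2, 4} := by
  have h01 := hS 0 1 (by simp [p2P4])
  have h23 := hS 2 3 (by simp [p2P4])
  have h34 := hS 3 4 (by simp [p2P4])
  have h45 := hS 4 5 (by simp [p2P4])
  simp only [Set.ext_iff, Fin.forall_fin_succ, Set.mem_insert_iff, Set.mem_singleton_iff]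
  grind

theorem nonempty_p1Paw_embedding {S : Set (Fin 6)}
    (hS : ∀ i j, p2P4.Adj i j → (i ∈ S ↔ j ∉ S)) : Nonempty (p1Paw ↪g p2P4 ⊔ cliqueOn S) := by
  rcases p2P4_bipartition_cases hS with rfl | rfl | rfl | rfl <;>
    [refine nonempty_embedding_of_adj_iff ![0, 5, 4, 3, 2] (by decide) ?_;
     refine nonempty_embedding_of_adj_iff ![1, 5, 4, 3, 2] (by decide) ?_;
     refine nonempty_embedding_of_adj_iff ![0, 2, 3, 4, 5] (by decide) ?_;
     refine nonempty_embedding_of_adj_iff ![1, 2, 3, 4, 5] (by decide) ?_] <;>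
    simp only [p2P4, p1Paw, cliqueOn, sup_adj, fromRel_adj] <;> decide

theorem free_p2P4_deleteEdgesWithin {V : Type*} {G : SimpleGraph V} {C : Set V}
    (hC : G.IsClique C) (hI : _root_.IsIndepSet G Cᶜ) (hf : _root_.Free p1Paw G) :
    _root_.Free p2P4 (G.deleteEdgesWithin C) := by
  refine ⟨fun f => ?_⟩
  obtain ⟨e⟩ := nonempty_p1Paw_embedding (S := f ⁻¹' C) fun i j hij =>
    show f i ∈ C ↔ f j ∉ C from mem_iff_notMem_of_deleteEdgesWithin_adj hI (f.map_adj_iff.2 hij)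
  exact hf.false ((Embedding.supCliqueOnPreimage hC f).comp e)

theorem p1PawFree_split_complement_clique_general {V : Type*} (G : SimpleGraph V)
    (C I : Set V) (hcover : ∀ v, v ∈ C ∨ v ∈ I)
    (hC : G.IsClique C) (hI : _root_.IsIndepSet G I) (hf : _root_.Free p1Paw G) :
    _root_.Free p2P4 (SimpleGraph.fromRel fun u v => G.Adj u v ∧ (u ∉ C ∨ v ∉ C)) ∧
    _root_.Free s123 (SimpleGraph.fromRel fun u v => G.Adj u v ∧ (u ∉ C ∨ v ∉ C)) := by
  have hCc : _root_.IsIndepSet G Cᶜ := hI.mono fun v hv => (hcover v).resolve_left hv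
  have hP2P4 := free_p2P4_deleteEdgesWithin hC hCc hf
  obtain ⟨e⟩ := nonempty_p2P4_embedding_s123
  exact ⟨hP2P4, hP2P4.of_embedding_left e⟩

/-- Removing the edges inside the clique of a `(P1+paw)`-free split graph yields a
bipartite graph with no induced `P2+P4`, and in particular no induced `S_{1,2,3}`. -/
theorem p1PawFree_split_complement_clique {V : Type*} (G : SimpleGraph V)
    (C I : Set V) (hcover : ∀ v, v ∈ C ∨ v ∈ I) (hdisj : ∀ v, ¬ (v ∈ C ∧ v ∈ I))
    (hC : G.IsClique C) (hI : _root_.IsIndepSet G I) (hf : _root_.Free p1Paw G) :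
    _root_.Free p2P4 (SimpleGraph.fromRel fun u v => G.Adj u v ∧ (u ∉ C ∨ v ∉ C)) ∧
    _root_.Free s123 (SimpleGraph.fromRel fun u v => G.Adj u v ∧ (u ∉ C ∨ v ∉ C)) :=
  p1PawFree_split_complement_clique_general G C I hcover hC hI hf
end
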